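/- arXiv:math/0702624 — 3 statements merged into one kernel-verified Lean document; each statement's English description precedes it below -/
import Mathlib

section
/- The Hida test function space W·N_{∞−}, defined as the intersection of all weighted Fock spaces W·N_{r,C} over r > 0 and C > 0 with the projective limit topology, is closed under the Wick product; that is, the Wick product :F₁F₂: of two elements of W·N_{∞−} again lies in W·N_{∞−}, and W·N_{∞−} is a commutative (associative) algebra under the Wick product. -/
open scoped ENNReal

/-- The Hida weight `w_r(I) = ∏_{(k,i) ∈ I} (C₁ k² + 1)^{r/2}`. -/
noncomputable def hidaWeight {β : Type*} (C₁ r : ℝ) (I : Multiset (ℤ × β)) : ℝ :=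
  (I.map (fun p => (C₁ * (p.1 : ℝ) ^ 2 + 1) ^ (r / 2))).prod

/-- The squared Fock norm `‖F‖²_{r,C} = Σ_I |b_I|² w_r(I) C^{|I|}`. -/
noncomputable def fockNormSq {β : Type*} (C₁ r C : ℝ) (b : Multiset (ℤ × β) → ℂ) : ℝ≥0∞ :=
  ∑' I : Multiset (ℤ × β), (‖b I‖₊ : ℝ≥0∞) ^ 2 *
    ENNReal.ofReal (hidaWeight C₁ r I) * ENNReal.ofReal C ^ Multiset.card I

/-- Membership in the Hida test function space `W·N_{∞−} = ∩_{r,C>0} W·N_{r,C}`. -/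
def memHida {β : Type*} (C₁ : ℝ) (b : Multiset (ℤ × β) → ℂ) : Prop :=
  ∀ r C : ℝ, 0 < r → 0 < C → fockNormSq C₁ r C b < ⊤

/-- Coefficients of the Wick product: `b³_I = Σ_{I₁ ∪ I₂ = I} b¹_{I₁} b²_{I₂}`. -/
noncomputable def wickProd {β : Type*} [DecidableEq β]
    (b₁ b₂ : Multiset (ℤ × β) → ℂ) (I : Multiset (ℤ × β)) : ℂ :=
  ∑ J ∈ I.powerset.toFinset, b₁ J * b₂ (I - J)

section Aux

variable {β : Type*} [DecidableEq β]

open scoped NNReal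

lemma mem_pows {I J : Multiset (ℤ × β)} : J ∈ I.powerset.toFinset ↔ J ≤ I := by
  simp [Multiset.mem_powerset]

lemma hidaWeight_nonneg {C₁ : ℝ} (hC₁ : 0 ≤ C₁) (r : ℝ) (I : Multiset (ℤ × β)) :
    0 ≤ hidaWeight C₁ r I := by
  refine Multiset.prod_nonneg fun a ha => ?_
  obtain ⟨p, -, rfl⟩ := Multiset.mem_map.1 ha
  have : (0 : ℝ) ≤ C₁ * (p.1 : ℝ) ^ 2 + 1 := by positivity
  exact Real.rpow_nonneg this _

lemma hidaWeight_add (C₁ r : ℝ) (J K : Multiset (ℤ × β)) :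
    hidaWeight C₁ r (J + K) = hidaWeight C₁ r J * hidaWeight C₁ r K := by
  simp [hidaWeight]

lemma wickProd_comm (b₁ b₂ : Multiset (ℤ × β) → ℂ) :
    wickProd b₁ b₂ = wickProd b₂ b₁ := by
  funext I
  unfold wickProd
  refine Finset.sum_nbij' (fun J => I - J) (fun J => I - J) ?_ ?_ ?_ ?_ ?_
  · intro J _; exact mem_pows.2 tsub_le_self
  · intro J _; exact mem_pows.2 tsub_le_self
  · intro J hJ; exact tsub_tsub_cancel_of_le (mem_pows.1 hJ)
  · intro J hJ; exact tsub_tsub_cancel_of_le (mem_pows.1 hJ)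
  · intro J hJ
    rw [tsub_tsub_cancel_of_le (mem_pows.1 hJ), mul_comm]

lemma wickProd_assoc (b₁ b₂ b₃ : Multiset (ℤ × β) → ℂ) :
    wickProd (wickProd b₁ b₂) b₃ = wickProd b₁ (wickProd b₂ b₃) := by
  funext I
  simp only [wickProd, Finset.sum_mul, Finset.mul_sum]
  rw [Finset.sum_sigma', Finset.sum_sigma']
  refine Finset.sum_nbij' (fun p => ⟨p.2, p.1 - p.2⟩) (fun q => ⟨q.1 + q.2, q.1⟩)
    ?_ ?_ ?_ ?_ ?_
  · rintro ⟨J, K⟩ hp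
    rw [Finset.mem_sigma] at hp
    obtain ⟨hJ, hK⟩ := hp
    rw [mem_pows] at hJ hK
    rw [Finset.mem_sigma, mem_pows, mem_pows]
    exact ⟨hK.trans hJ, tsub_le_tsub_right hJ K⟩
  · rintro ⟨J, K⟩ hq
    rw [Finset.mem_sigma] at hq
    obtain ⟨hJ, hK⟩ := hq
    rw [mem_pows] at hJ hK
    rw [Finset.mem_sigma, mem_pows, mem_pows]
    constructor
    · calc J + K ≤ J + (I - J) := add_le_add (le_refl J) hK
        _ = I := add_tsub_cancel_of_le hJ
    · exact Multiset.le_add_right J K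
  · rintro ⟨J, K⟩ hp
    rw [Finset.mem_sigma] at hp
    obtain ⟨hJ, hK⟩ := hp
    rw [mem_pows] at hJ hK
    simp [add_tsub_cancel_of_le hK]
  · rintro ⟨J, K⟩ hq
    simp
  · rintro ⟨J, K⟩ hp
    rw [Finset.mem_sigma] at hp
    obtain ⟨hJ, hK⟩ := hp
    rw [mem_pows] at hJ hK
    simp only
    rw [tsub_tsub, add_tsub_cancel_of_le hK]
    ring

/-- The shift equivalence `K ↦ J + K`. -/
def shiftEquiv (J : Multiset (ℤ × β)) :
    Multiset (ℤ × β) ≃ {I : Multiset (ℤ × β) // J ≤ I} where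
  toFun K := ⟨J + K, Multiset.le_add_right J K⟩
  invFun I := I.1 - J
  left_inv K := add_tsub_cancel_left J K
  right_inv I := Subtype.ext (add_tsub_cancel_of_le I.2)

lemma tsum_wick (g₁ g₂ : Multiset (ℤ × β) → ℝ≥0∞) :
    (∑' I : Multiset (ℤ × β), ∑ J ∈ I.powerset.toFinset, g₁ J * g₂ (I - J))
      = (∑' J : Multiset (ℤ × β), g₁ J) * (∑' K : Multiset (ℤ × β), g₂ K) := by
  have h1 : ∀ I : Multiset (ℤ × β), (∑ J ∈ I.powerset.toFinset, g₁ J * g₂ (I - J))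
      = ∑' J : Multiset (ℤ × β), if J ≤ I then g₁ J * g₂ (I - J) else 0 := by
    intro I
    rw [tsum_eq_sum (s := I.powerset.toFinset)
      (fun J hJ => if_neg fun h => hJ (mem_pows.2 h))]
    exact Finset.sum_congr rfl fun J hJ => (if_pos (mem_pows.1 hJ)).symm
  simp_rw [h1]
  rw [ENNReal.tsum_comm]
  have h2 : ∀ J : Multiset (ℤ × β),
      (∑' I : Multiset (ℤ × β), if J ≤ I then g₁ J * g₂ (I - J) else 0)
      = g₁ J * ∑' K : Multiset (ℤ × β), g₂ K := by
    intro J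
    have hind : (fun I : Multiset (ℤ × β) => if J ≤ I then g₁ J * g₂ (I - J) else 0)
        = Set.indicator {I : Multiset (ℤ × β) | J ≤ I}
            (fun I => g₁ J * g₂ (I - J)) := by
      funext I
      simp [Set.indicator_apply, Set.mem_setOf_eq]
    rw [hind, ← tsum_subtype]
    have he := Equiv.tsum_eq (shiftEquiv J)
      (fun I : {I : Multiset (ℤ × β) // J ≤ I} => g₁ J * g₂ (I.1 - J))
    calc (∑' x : ↥{I : Multiset (ℤ × β) | J ≤ I}, g₁ J * g₂ (x.1 - J))
        = ∑' K : Multiset (ℤ × β), g₁ J * g₂ (J + K - J) := he.symm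
      _ = g₁ J * ∑' K : Multiset (ℤ × β), g₂ K := by
          simp only [add_tsub_cancel_left]
          exact ENNReal.tsum_mul_left
  simp_rw [h2]
  exact ENNReal.tsum_mul_right

lemma wick_pointwise (b₁ b₂ : Multiset (ℤ × β) → ℂ) (I : Multiset (ℤ × β)) :
    (‖wickProd b₁ b₂ I‖₊ : ℝ≥0∞) ^ 2 ≤
      2 ^ Multiset.card I * ∑ J ∈ I.powerset.toFinset,
        (‖b₁ J‖₊ : ℝ≥0∞) ^ 2 * (‖b₂ (I - J)‖₊ : ℝ≥0∞) ^ 2 := by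
  have h0 : ‖wickProd b₁ b₂ I‖₊ ^ 2 ≤ (I.powerset.toFinset.card : ℝ≥0) *
      ∑ J ∈ I.powerset.toFinset, (‖b₁ J‖₊ * ‖b₂ (I - J)‖₊) ^ 2 := by
    calc ‖wickProd b₁ b₂ I‖₊ ^ 2
        ≤ (∑ J ∈ I.powerset.toFinset, ‖b₁ J * b₂ (I - J)‖₊) ^ 2 := by
          gcongr
          exact nnnorm_sum_le _ _
      _ = (∑ J ∈ I.powerset.toFinset, ‖b₁ J‖₊ * ‖b₂ (I - J)‖₊) ^ 2 := by
          simp [nnnorm_mul]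
      _ ≤ _ := sq_sum_le_card_mul_sum_sq
  have hcard : (I.powerset.toFinset.card : ℝ≥0∞) ≤ 2 ^ Multiset.card I := by
    have : I.powerset.toFinset.card ≤ 2 ^ Multiset.card I :=
      le_trans (Multiset.toFinset_card_le _) (le_of_eq (Multiset.card_powerset I))
    exact_mod_cast Nat.cast_le.2 this
  calc (‖wickProd b₁ b₂ I‖₊ : ℝ≥0∞) ^ 2
      ≤ ((I.powerset.toFinset.card : ℝ≥0) : ℝ≥0∞) *
        ∑ J ∈ I.powerset.toFinset, ((‖b₁ J‖₊ * ‖b₂ (I - J)‖₊ : ℝ≥0) : ℝ≥0∞) ^ 2 := by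
        rw [← ENNReal.coe_pow]
        calc ((‖wickProd b₁ b₂ I‖₊ ^ 2 : ℝ≥0) : ℝ≥0∞)
            ≤ (((I.powerset.toFinset.card : ℝ≥0) *
              ∑ J ∈ I.powerset.toFinset, (‖b₁ J‖₊ * ‖b₂ (I - J)‖₊) ^ 2 : ℝ≥0) : ℝ≥0∞) :=
              ENNReal.coe_le_coe.2 h0
          _ = _ := by push_cast; rfl
    _ ≤ 2 ^ Multiset.card I * ∑ J ∈ I.powerset.toFinset,
        (‖b₁ J‖₊ : ℝ≥0∞) ^ 2 * (‖b₂ (I - J)‖₊ : ℝ≥0∞) ^ 2 := by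
        push_cast
        simp only [mul_pow]
        gcongr

end Aux

/-- The Hida test function space `W·N_{∞−}` is closed under the Wick product, and the
Wick product is commutative and associative on it. -/
theorem hida_closed_under_wick (n : ℕ) (C₁ : ℝ) (hC₁ : 0 < C₁)
    (b₁ b₂ b₃ : Multiset (ℤ × Fin n) → ℂ)
    (h₁ : memHida C₁ b₁) (h₂ : memHida C₁ b₂) (h₃ : memHida C₁ b₃) :
    memHida C₁ (wickProd b₁ b₂) ∧
    wickProd b₁ b₂ = wickProd b₂ b₁ ∧
    wickProd (wickProd b₁ b₂) b₃ = wickProd b₁ (wickProd b₂ b₃) := by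
  refine ⟨?_, wickProd_comm b₁ b₂, wickProd_assoc b₁ b₂ b₃⟩
  intro r C hr hC
  have hC2 : (0 : ℝ) < 2 * C := by linarith
  set g₁ : Multiset (ℤ × Fin n) → ℝ≥0∞ := fun J => (‖b₁ J‖₊ : ℝ≥0∞) ^ 2 *
    ENNReal.ofReal (hidaWeight C₁ r J) * ENNReal.ofReal (2 * C) ^ Multiset.card J with hg₁
  set g₂ : Multiset (ℤ × Fin n) → ℝ≥0∞ := fun J => (‖b₂ J‖₊ : ℝ≥0∞) ^ 2 *
    ENNReal.ofReal (hidaWeight C₁ r J) * ENNReal.ofReal (2 * C) ^ Multiset.card J with hg₂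
  have key : fockNormSq C₁ r C (wickProd b₁ b₂) ≤
      (∑' J : Multiset (ℤ × Fin n), g₁ J) * (∑' K : Multiset (ℤ × Fin n), g₂ K) := by
    rw [← tsum_wick g₁ g₂]
    simp only [fockNormSq]
    refine ENNReal.tsum_le_tsum fun I => ?_
    calc (‖wickProd b₁ b₂ I‖₊ : ℝ≥0∞) ^ 2 * ENNReal.ofReal (hidaWeight C₁ r I) *
          ENNReal.ofReal C ^ Multiset.card I
        ≤ (2 ^ Multiset.card I * ∑ J ∈ I.powerset.toFinset,
            (‖b₁ J‖₊ : ℝ≥0∞) ^ 2 * (‖b₂ (I - J)‖₊ : ℝ≥0∞) ^ 2) *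
          ENNReal.ofReal (hidaWeight C₁ r I) * ENNReal.ofReal C ^ Multiset.card I := by
          gcongr
          exact wick_pointwise b₁ b₂ I
      _ = ∑ J ∈ I.powerset.toFinset, 2 ^ Multiset.card I *
            ((‖b₁ J‖₊ : ℝ≥0∞) ^ 2 * (‖b₂ (I - J)‖₊ : ℝ≥0∞) ^ 2) *
            ENNReal.ofReal (hidaWeight C₁ r I) * ENNReal.ofReal C ^ Multiset.card I := by
          rw [Finset.mul_sum, Finset.sum_mul, Finset.sum_mul]
      _ = ∑ J ∈ I.powerset.toFinset, g₁ J * g₂ (I - J) := by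
          refine Finset.sum_congr rfl fun J hJ => ?_
          have hle : J ≤ I := mem_pows.1 hJ
          obtain ⟨K, rfl⟩ : ∃ K, I = J + K := ⟨I - J, (add_tsub_cancel_of_le hle).symm⟩
          rw [add_tsub_cancel_left]
          rw [hg₁, hg₂]
          simp only
          rw [Multiset.card_add, hidaWeight_add,
            ENNReal.ofReal_mul (hidaWeight_nonneg hC₁.le r J),
            ENNReal.ofReal_mul (by norm_num : (0 : ℝ) ≤ 2),
            ENNReal.ofReal_ofNat, pow_add]
          ring
  have h1' := h₁ r (2 * C) hr hC2
  have h2' := h₂ r (2 * C) hr hC2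
  rw [fockNormSq] at h1' h2'
  exact lt_of_le_of_lt key (ENNReal.mul_lt_top h1' h2')
end

section
/- The Poisson bracket {F₁,F₂} = Σ Ω^{(k_1,i_1),(k_2,i_2)} :a_{(k_1,i_1)}F₁ · a_{(k_2,i_2)}F₂:, where Ω^{(k,2i),(k,2i+1)} = -(Ck²+1) = -Ω^{(k,2i+1),(k,2i)} and zero otherwise, is continuous on the Hida test function space: for all r, C there exist r₁, C₁ and K with ‖{F₁,F₂}‖_{r,C} ≤ K ‖F₁‖_{r₁,C₁} ‖F₂‖_{r₁,C₁}. -/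
open scoped ENNReal

/-- Index set for the Fock basis over `H¹(S¹;ℝ^{2m})`: a frequency `k ∈ ℤ` and a basis
direction of `ℝ^{2m}`, recorded as a pair `(i, b)` with `i ∈ Fin m`, `b = false`
standing for the coordinate `2i` and `b = true` for `2i+1`. -/
abbrev HidaIdx (m : ℕ) := ℤ × (Fin m × Bool)

/-- The Fock norm `‖F‖_{r,C}`. -/
noncomputable def fockNorm {β : Type*} (C₁ r C : ℝ) (b : Multiset (ℤ × β) → ℂ) : ℝ≥0∞ :=
  fockNormSq C₁ r C b ^ (1 / 2 : ℝ)

/-- The (unbounded) inverse symplectic matrix: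
`Ω^{(k,2i),(k,2i+1)} = -(Ck²+1) = -Ω^{(k,2i+1),(k,2i)}`, all other entries zero. -/
noncomputable def OmegaInv (C : ℝ) {m : ℕ} (p q : HidaIdx m) : ℝ :=
  if p.1 = q.1 ∧ p.2.1 = q.2.1 then
    (if p.2.2 = false ∧ q.2.2 = true then -(C * (p.1 : ℝ) ^ 2 + 1)
     else if p.2.2 = true ∧ q.2.2 = false then C * (p.1 : ℝ) ^ 2 + 1 else 0)
  else 0

/-- The annihilation operator `a_p` on coefficient families: it removes one occurrence
of the Boson `p`, with its multiplicity as combinatorial constant. -/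
noncomputable def ann {β : Type*} [DecidableEq β] (p : ℤ × β)
    (b : Multiset (ℤ × β) → ℂ) (J : Multiset (ℤ × β)) : ℂ :=
  ((J.count p + 1 : ℕ) : ℂ) * b (p ::ₘ J)

/-- The Poisson bracket
`{F₁,F₂} = Σ Ω^{(k₁,i₁),(k₂,i₂)} :a_{(k₁,i₁)}F₁ · a_{(k₂,i₂)}F₂:` on coefficients. -/
noncomputable def poissonBracket (C : ℝ) {m : ℕ}
    (b₁ b₂ : Multiset (HidaIdx m) → ℂ) (I : Multiset (HidaIdx m)) : ℂ :=
  ∑' pq : HidaIdx m × HidaIdx m, (OmegaInv C pq.1 pq.2 : ℂ) *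
    ∑ J ∈ I.powerset.toFinset, ann pq.1 b₁ J * ann pq.2 b₂ (I - J)

set_option linter.unusedSectionVars false

/-! ### Auxiliary lemmas -/


section Aux

lemma PB_enorm_tsum_le {ι E : Type*} [NormedAddCommGroup E] [CompleteSpace E] (f : ι → E) :
    (‖∑' i, f i‖₊ : ℝ≥0∞) ≤ ∑' i, (‖f i‖₊ : ℝ≥0∞) := by
  by_cases h : Summable fun i => ‖f i‖₊
  · rw [← ENNReal.coe_tsum h]
    exact ENNReal.coe_le_coe.2 (nnnorm_tsum_le h)
  · rw [not_ne_iff.1 fun hh => h (ENNReal.tsum_coe_ne_top_iff_summable.1 hh)]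
    exact le_top

variable {β : Type*} [DecidableEq β] {C₁ s D : ℝ}

lemma PB_base_pos (hC₁ : 0 < C₁) (k : ℤ) : (0:ℝ) < C₁ * (k : ℝ) ^ 2 + 1 := by positivity

lemma PB_hidaWeight_pos (hC₁ : 0 < C₁) (I : Multiset (ℤ × β)) : 0 < hidaWeight C₁ s I := by
  refine Multiset.prod_pos ?_
  intro a ha
  rw [Multiset.mem_map] at ha
  obtain ⟨p, _, rfl⟩ := ha
  exact Real.rpow_pos_of_pos (PB_base_pos hC₁ p.1) _

lemma PB_hidaWeight_nonneg (hC₁ : 0 < C₁) (I : Multiset (ℤ × β)) : 0 ≤ hidaWeight C₁ s I := by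
  refine Multiset.prod_nonneg ?_
  intro a ha
  rw [Multiset.mem_map] at ha
  obtain ⟨p, _, rfl⟩ := ha
  exact Real.rpow_nonneg (by positivity) _

lemma PB_hidaWeight_cons (p : ℤ × β) (J : Multiset (ℤ × β)) :
    hidaWeight C₁ s (p ::ₘ J) = (C₁ * (p.1 : ℝ) ^ 2 + 1) ^ (s / 2) * hidaWeight C₁ s J := by
  simp [hidaWeight]

lemma PB_hidaWeight_add (I J : Multiset (ℤ × β)) :
    hidaWeight C₁ s (I + J) = hidaWeight C₁ s I * hidaWeight C₁ s J := by
  simp [hidaWeight]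

lemma PB_hidaWeight_split (hC₁ : 0 < C₁) (t : ℝ) (I : Multiset (ℤ × β)) :
    hidaWeight C₁ s I = hidaWeight C₁ t I * hidaWeight C₁ (s - t) I := by
  rw [hidaWeight, hidaWeight, hidaWeight, ← Multiset.prod_map_mul]
  congr 1
  refine Multiset.map_congr rfl ?_
  intro p _
  rw [← Real.rpow_add (PB_base_pos hC₁ p.1)]
  ring_nf

lemma PB_ofReal_hidaWeight (hC₁ : 0 < C₁) (I : Multiset (ℤ × β)) :
    ENNReal.ofReal (hidaWeight C₁ s I) =
      (I.map (fun x => ENNReal.ofReal ((C₁ * (x.1 : ℝ) ^ 2 + 1) ^ (s / 2)))).prod := by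
  induction I using Multiset.induction_on with
  | empty => simp [hidaWeight]
  | cons p J ih =>
    rw [PB_hidaWeight_cons, ENNReal.ofReal_mul (Real.rpow_nonneg (by positivity) _),
      Multiset.map_cons, Multiset.prod_cons, ih]

/-- weight together with the geometric factor -/
noncomputable def wF (C₁ s D : ℝ) {β : Type*} (K : Multiset (ℤ × β)) : ℝ≥0∞ :=
  ENNReal.ofReal (hidaWeight C₁ s K) * ENNReal.ofReal D ^ Multiset.card K

lemma PB_wF_ne_zero (hC₁ : 0 < C₁) (hD : 0 < D) (K : Multiset (ℤ × β)) : wF C₁ s D K ≠ 0 := by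
  apply mul_ne_zero
  · simpa using (ENNReal.ofReal_pos.2 (PB_hidaWeight_pos hC₁ K)).ne'
  · exact pow_ne_zero _ (ENNReal.ofReal_pos.2 hD).ne'

lemma PB_wF_ne_top (K : Multiset (ℤ × β)) : wF C₁ s D K ≠ ⊤ :=
  ENNReal.mul_ne_top ENNReal.ofReal_ne_top (ENNReal.pow_ne_top ENNReal.ofReal_ne_top)

lemma PB_sq_term_le (b : Multiset (ℤ × β) → ℂ) (K : Multiset (ℤ × β)) :
    (‖b K‖₊ : ℝ≥0∞) ^ 2 * wF C₁ s D K ≤ fockNormSq C₁ s D b := by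
  rw [wF, ← mul_assoc]
  exact ENNReal.le_tsum K

lemma PB_coeff_le (hC₁ : 0 < C₁) (hD : 0 < D) (b : Multiset (ℤ × β) → ℂ)
    (hb : fockNormSq C₁ s D b ≠ ⊤) (K : Multiset (ℤ × β)) :
    (‖b K‖₊ : ℝ≥0∞) ≤ fockNorm C₁ s D b * (wF C₁ s D K) ^ (-(1/2) : ℝ) := by
  have h2 : (‖b K‖₊ : ℝ≥0∞) ^ 2 ≤ fockNormSq C₁ s D b * (wF C₁ s D K)⁻¹ := by
    rw [← div_eq_mul_inv, ENNReal.le_div_iff_mul_le (Or.inl (PB_wF_ne_zero hC₁ hD K))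
      (Or.inl (PB_wF_ne_top K))]
    exact PB_sq_term_le b K
  calc (‖b K‖₊ : ℝ≥0∞) = ((‖b K‖₊ : ℝ≥0∞) ^ 2) ^ ((1:ℝ)/2) := by
        rw [← ENNReal.rpow_natCast _ 2, ← ENNReal.rpow_mul]; norm_num
    _ ≤ (fockNormSq C₁ s D b * (wF C₁ s D K)⁻¹) ^ ((1:ℝ)/2) :=
        ENNReal.rpow_le_rpow h2 (by norm_num)
    _ = fockNorm C₁ s D b * (wF C₁ s D K) ^ (-(1/2) : ℝ) := by
        rw [ENNReal.mul_rpow_of_ne_top hb (by simp [ENNReal.inv_ne_top, PB_wF_ne_zero hC₁ hD K]),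
          ENNReal.inv_rpow, ← ENNReal.rpow_neg, fockNorm]

lemma PB_wF_cons (hC₁ : 0 < C₁) (p : ℤ × β) (J : Multiset (ℤ × β)) :
    wF C₁ s D (p ::ₘ J) =
      ENNReal.ofReal ((C₁ * (p.1 : ℝ) ^ 2 + 1) ^ (s / 2)) * ENNReal.ofReal D * wF C₁ s D J := by
  rw [wF, PB_hidaWeight_cons, ENNReal.ofReal_mul (Real.rpow_nonneg (by positivity) _),
    Multiset.card_cons, pow_succ, wF]
  ring

lemma PB_wF_cons_pair (hC₁ : 0 < C₁) (p q : ℤ × β) (hq : q.1 = p.1)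
    {J I : Multiset (ℤ × β)} (hJ : J ≤ I) :
    wF C₁ s D (p ::ₘ J) * wF C₁ s D (q ::ₘ (I - J)) =
      (ENNReal.ofReal ((C₁ * (p.1 : ℝ) ^ 2 + 1) ^ (s / 2))) ^ 2 *
        (ENNReal.ofReal D) ^ 2 * wF C₁ s D I := by
  rw [PB_wF_cons hC₁, PB_wF_cons hC₁, hq]
  have hI : J + (I - J) = I := by rw [add_comm]; exact tsub_add_cancel_of_le hJ
  have key : wF C₁ s D I = wF C₁ s D J * wF C₁ s D (I - J) := by
    conv_lhs => rw [← hI]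
    rw [wF, wF, wF, PB_hidaWeight_add, Multiset.card_add, pow_add,
      ENNReal.ofReal_mul (PB_hidaWeight_nonneg hC₁ J)]
    ring
  rw [key]
  ring

end Aux

section Multisets

variable {α : Type*}

lemma PB_tsum_pi_fin (h : α → ℝ≥0∞) : ∀ n : ℕ,
    ∑' v : Fin n → α, ∏ i, h (v i) = (∑' x, h x) ^ n := by
  intro n
  induction n with
  | zero =>
    rw [pow_zero]
    rw [tsum_eq_single default (fun v hv => absurd (Subsingleton.elim v default) hv)]
    simp
  | succ n ih =>
    rw [← (Fin.consEquiv (fun _ : Fin (n+1) => α)).tsum_eq, pow_succ, mul_comm]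
    rw [ENNReal.tsum_prod']
    simp only [Fin.consEquiv_apply, Fin.prod_univ_succ, Fin.cons_zero, Fin.cons_succ]
    rw [← ih, ← ENNReal.tsum_mul_right]
    congr 1
    ext a
    rw [← ENNReal.tsum_mul_left]

lemma PB_tsum_multiset_card_le (h : α → ℝ≥0∞) (n : ℕ) :
    ∑' I : {I : Multiset α // Multiset.card I = n}, ((I : Multiset α).map h).prod ≤
      (∑' x, h x) ^ n := by
  rw [← PB_tsum_pi_fin h n]
  refine le_trans (ENNReal.tsum_le_tsum_comp_of_surjective (f := fun v : Fin n → α =>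
    (⟨(List.ofFn v : Multiset α), by simp⟩ : {I : Multiset α // Multiset.card I = n})) ?_ _) ?_
  · rintro ⟨I, hI⟩
    obtain ⟨l, rfl⟩ : ∃ l : List α, I = ↑l := ⟨I.toList, (Multiset.coe_toList I).symm⟩
    simp only [Multiset.coe_card] at hI
    subst hI
    exact ⟨l.get, by simp [List.ofFn_get]⟩
  · refine le_of_eq (tsum_congr fun v => ?_)
    simp only [Multiset.map_coe, Multiset.prod_coe, List.map_ofFn, List.prod_ofFn]
    rfl

lemma PB_tsum_multiset_prod_le (h : α → ℝ≥0∞) :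
    ∑' I : Multiset α, (I.map h).prod ≤ ∑' n : ℕ, (∑' x, h x) ^ n := by
  rw [← (Equiv.sigmaFiberEquiv (Multiset.card : Multiset α → ℕ)).tsum_eq, ENNReal.tsum_sigma']
  exact ENNReal.tsum_le_tsum fun n => PB_tsum_multiset_card_le h n

end Multisets

section Summability

lemma PB_summable_inv_sq_add_one : Summable (fun k : ℤ => (((k:ℝ)) ^ 2 + 1)⁻¹) := by
  have h1 : Summable (fun k : ℤ => 1 / (k:ℝ) ^ 2) :=
    (Real.summable_one_div_int_pow (p := 2)).2 one_lt_two
  have h2 : Summable (fun k : ℤ => if k = 0 then (1:ℝ) else 0) :=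
    summable_of_ne_finset_zero (s := {0}) (by intro k hk; simp at hk; simp [hk])
  refine Summable.of_nonneg_of_le (fun k => by positivity) (fun k => ?_) (h2.add h1)
  by_cases hk : k = 0
  · simp [hk]
  · have hk2 : (1:ℝ) ≤ (k:ℝ)^2 := by
      have : (1:ℝ) ≤ |(k:ℝ)| := by
        rw [← Int.cast_abs]; exact_mod_cast Int.one_le_abs hk
      nlinarith [abs_nonneg (k:ℝ), sq_abs (k:ℝ)]
    simp only [hk, if_false, zero_add, one_div]
    apply inv_anti₀ (by positivity)
    linarith

lemma PB_Z_lt_top : ∑' k : ℤ, ENNReal.ofReal (((k:ℝ)) ^ 2 + 1)⁻¹ < ⊤ := by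
  rw [← ENNReal.ofReal_tsum_of_nonneg (fun k => by positivity) PB_summable_inv_sq_add_one]
  exact ENNReal.ofReal_lt_top

variable {C₁ Cω r₁ : ℝ}

lemma PB_min_mul_le (k : ℤ) : min C₁ 1 * ((k:ℝ) ^ 2 + 1) ≤ C₁ * (k:ℝ) ^ 2 + 1 := by
  have h1 : min C₁ 1 ≤ C₁ := min_le_left _ _
  have h2 : min C₁ 1 ≤ 1 := min_le_right _ _
  nlinarith [sq_nonneg (k:ℝ)]

lemma PB_T_term_le (hC₁ : 0 < C₁) (k : ℤ) :
    (C₁ * (k:ℝ) ^ 2 + 1) ^ ((-6:ℝ)/2) ≤ (min C₁ 1)⁻¹ * (((k:ℝ)) ^ 2 + 1)⁻¹ := by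
  have ha : (1:ℝ) ≤ C₁ * (k:ℝ) ^ 2 + 1 := by nlinarith [sq_nonneg (k:ℝ)]
  have hm : 0 < min C₁ 1 := lt_min hC₁ one_pos
  calc (C₁ * (k:ℝ) ^ 2 + 1) ^ ((-6:ℝ)/2) ≤ (C₁ * (k:ℝ) ^ 2 + 1) ^ (-1:ℝ) :=
        Real.rpow_le_rpow_of_exponent_le ha (by norm_num)
    _ = (C₁ * (k:ℝ) ^ 2 + 1)⁻¹ := Real.rpow_neg_one _
    _ ≤ (min C₁ 1 * ((k:ℝ) ^ 2 + 1))⁻¹ := by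
        apply inv_anti₀ (by positivity) (PB_min_mul_le k)
    _ = (min C₁ 1)⁻¹ * (((k:ℝ)) ^ 2 + 1)⁻¹ := by rw [mul_inv]

lemma PB_S_term_le (hC₁ : 0 < C₁) (hCω : 0 < Cω) (hr₁ : 2 ≤ r₁ / 2) (k : ℤ) :
    (Cω * (k:ℝ) ^ 2 + 1) / (C₁ * (k:ℝ) ^ 2 + 1) ^ (r₁/2) ≤
      ((Cω + 1) * ((min C₁ 1) ^ 2)⁻¹) * (((k:ℝ)) ^ 2 + 1)⁻¹ := by
  have ha : (1:ℝ) ≤ C₁ * (k:ℝ) ^ 2 + 1 := by nlinarith [sq_nonneg (k:ℝ)]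
  have hm : 0 < min C₁ 1 := lt_min hC₁ one_pos
  set u : ℝ := (k:ℝ) ^ 2 + 1 with hu
  have hu1 : (1:ℝ) ≤ u := by nlinarith [sq_nonneg (k:ℝ)]
  have hu0 : 0 < u := by linarith
  have hd : (min C₁ 1) ^ 2 * u ^ 2 ≤ (C₁ * (k:ℝ) ^ 2 + 1) ^ (r₁/2) := by
    calc (min C₁ 1) ^ 2 * u ^ 2 = (min C₁ 1 * u) ^ 2 := by ring
      _ ≤ (C₁ * (k:ℝ) ^ 2 + 1) ^ 2 := by
          apply pow_le_pow_left₀ (by positivity) (PB_min_mul_le k)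
      _ = (C₁ * (k:ℝ) ^ 2 + 1) ^ (2:ℝ) := by
          rw [← Real.rpow_natCast (C₁ * (k:ℝ) ^ 2 + 1) 2]; norm_num
      _ ≤ (C₁ * (k:ℝ) ^ 2 + 1) ^ (r₁/2) := Real.rpow_le_rpow_of_exponent_le ha hr₁
  have hnum : Cω * (k:ℝ) ^ 2 + 1 ≤ (Cω + 1) * u := by rw [hu]; nlinarith [sq_nonneg (k:ℝ)]
  calc (Cω * (k:ℝ) ^ 2 + 1) / (C₁ * (k:ℝ) ^ 2 + 1) ^ (r₁/2)
      ≤ ((Cω + 1) * u) / ((min C₁ 1) ^ 2 * u ^ 2) := by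
        apply div_le_div₀ (by positivity) hnum (by positivity) hd
    _ = ((Cω + 1) * ((min C₁ 1) ^ 2)⁻¹) * u⁻¹ := by field_simp

lemma PB_tsum_fst {m : ℕ} (F : ℤ → ℝ≥0∞) :
    ∑' p : HidaIdx m, F p.1 = ((m * 2 : ℕ) : ℝ≥0∞) * ∑' k : ℤ, F k := by
  rw [ENNReal.tsum_prod']
  have : ∀ k : ℤ, ∑' _ : Fin m × Bool, F k = ((m * 2 : ℕ) : ℝ≥0∞) * F k := by
    intro k
    rw [tsum_fintype]
    simp [Finset.sum_const, Fintype.card_prod, mul_comm]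
  simp_rw [this]
  rw [ENNReal.tsum_mul_left]

end Summability

section Pointwise

def flipIdx {m : ℕ} (p : HidaIdx m) : HidaIdx m := (p.1, p.2.1, !p.2.2)

lemma PB_omega_enorm_le {m : ℕ} {Cω : ℝ} (hCω : 0 < Cω) (p q : HidaIdx m) :
    (‖OmegaInv Cω p q‖₊ : ℝ≥0∞) ≤
      if q = flipIdx p then ENNReal.ofReal (Cω * (p.1 : ℝ) ^ 2 + 1) else 0 := by
  have hb : (0:ℝ) ≤ Cω * (p.1 : ℝ) ^ 2 + 1 := by positivity
  obtain ⟨k, i, b⟩ := p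
  obtain ⟨k', i', b'⟩ := q
  unfold OmegaInv flipIdx
  by_cases h1 : k = k' ∧ i = i'
  · obtain ⟨rfl, rfl⟩ := h1
    simp only [and_self, if_true, true_and]
    cases b <;> cases b' <;>
      simp only [Bool.false_eq_true, Bool.true_eq_false, and_true, and_false, false_and,
        true_and, and_self, if_true, if_false, Bool.not_false, Bool.not_true, nnnorm_neg,
        nnnorm_zero, ENNReal.coe_zero, le_refl, Prod.mk.injEq, reduceCtorEq, ite_false,
        ite_true, (show (‖Cω * (k:ℝ) ^ 2 + 1‖₊ : ℝ≥0∞) = ENNReal.ofReal (Cω * (k:ℝ) ^ 2 + 1) from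
            Real.enorm_eq_ofReal (by positivity)), le_refl]
  · rw [if_neg (by simpa using h1)]
    have : ¬ ((k', i', b') = (k, i, !b)) := by
      simp only [Prod.mk.injEq, not_and]
      intro hk hi
      exact absurd ⟨hk.symm, hi.symm ▸ rfl⟩ h1
    simp [this]

lemma PB_ann_enorm {β : Type*} [DecidableEq β] (p : ℤ × β) (b : Multiset (ℤ × β) → ℂ)
    (J : Multiset (ℤ × β)) :
    (‖ann p b J‖₊ : ℝ≥0∞) = ((J.count p : ℝ≥0∞) + 1) * (‖b (p ::ₘ J)‖₊ : ℝ≥0∞) := by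
  rw [ann, nnnorm_mul, ENNReal.coe_mul, RCLike.nnnorm_natCast]
  push_cast
  ring

variable {m : ℕ} {C₁ Cω r₁ C₁' : ℝ}

lemma PB_pointwise (hC₁ : 0 < C₁) (hCω : 0 < Cω) (hD : 0 < C₁')
    (b₁ b₂ : Multiset (HidaIdx m) → ℂ)
    (h₁ : fockNormSq C₁ r₁ C₁' b₁ ≠ ⊤) (h₂ : fockNormSq C₁ r₁ C₁' b₂ ≠ ⊤)
    (I : Multiset (HidaIdx m)) :
    (‖poissonBracket Cω b₁ b₂ I‖₊ : ℝ≥0∞) ≤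
      fockNorm C₁ r₁ C₁' b₁ * fockNorm C₁ r₁ C₁' b₂ *
      (∑' p : HidaIdx m, ENNReal.ofReal (Cω * (p.1:ℝ)^2 + 1) *
        (ENNReal.ofReal ((C₁ * (p.1:ℝ)^2 + 1) ^ (r₁/2)))⁻¹) *
      ((Multiset.card I : ℝ≥0∞) + 1)^2 * 2^(Multiset.card I) *
      (ENNReal.ofReal C₁')⁻¹ * (wF C₁ r₁ C₁' I) ^ (-(1/2) : ℝ) := by
  set n := Multiset.card I with hn
  set N₁ := fockNorm C₁ r₁ C₁' b₁ with hN₁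
  set N₂ := fockNorm C₁ r₁ C₁' b₂ with hN₂
  set Dc := ENNReal.ofReal C₁' with hDc
  set A : HidaIdx m → ℝ≥0∞ := fun p => ENNReal.ofReal ((C₁ * (p.1:ℝ)^2 + 1) ^ (r₁/2)) with hA
  set ω : HidaIdx m → ℝ≥0∞ := fun p => ENNReal.ofReal (Cω * (p.1:ℝ)^2 + 1) with hω
  set B : HidaIdx m → ℝ≥0∞ := fun p => ∑ J ∈ I.powerset.toFinset,
    (‖ann p b₁ J‖₊ : ℝ≥0∞) * (‖ann (flipIdx p) b₂ (I - J)‖₊ : ℝ≥0∞) with hB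
  have per_pq : ∀ p q : HidaIdx m,
      (‖(OmegaInv Cω p q : ℂ) *
          ∑ J ∈ I.powerset.toFinset, ann p b₁ J * ann q b₂ (I - J)‖₊ : ℝ≥0∞) ≤
        (if q = flipIdx p then ω p * B p else 0) := by
    intro p q
    rw [nnnorm_mul, ENNReal.coe_mul]
    by_cases h : q = flipIdx p
    · subst h
      rw [if_pos rfl]
      refine mul_le_mul' ?_ ?_
      · have h0 := PB_omega_enorm_le hCω p (flipIdx p)
        rw [if_pos rfl] at h0
        rw [Complex.nnnorm_real]
        exact h0
      · calc (‖∑ J ∈ I.powerset.toFinset, ann p b₁ J * ann (flipIdx p) b₂ (I - J)‖₊ : ℝ≥0∞)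
            ≤ ∑ J ∈ I.powerset.toFinset,
                (‖ann p b₁ J * ann (flipIdx p) b₂ (I - J)‖₊ : ℝ≥0∞) := by
              rw [← ENNReal.coe_finset_sum]
              exact ENNReal.coe_le_coe.2 (nnnorm_sum_le _ _)
          _ = B p := by
              rw [hB]
              refine Finset.sum_congr rfl fun J _ => ?_
              rw [nnnorm_mul, ENNReal.coe_mul]
    · rw [if_neg h]
      have h0 := PB_omega_enorm_le hCω p q
      rw [if_neg h] at h0
      simp only [le_zero_iff] at h0
      rw [Complex.nnnorm_real, h0, zero_mul]
  have step1 : (‖poissonBracket Cω b₁ b₂ I‖₊ : ℝ≥0∞) ≤ ∑' p : HidaIdx m, ω p * B p := by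
    refine le_trans (PB_enorm_tsum_le _) ?_
    rw [ENNReal.tsum_prod']
    refine le_trans (ENNReal.tsum_le_tsum fun p =>
      ENNReal.tsum_le_tsum fun q => per_pq p q) ?_
    refine le_of_eq (tsum_congr fun p => ?_)
    exact tsum_ite_eq (flipIdx p) (fun _ => ω p * B p)
  have per_J : ∀ p : HidaIdx m, ∀ J ∈ I.powerset.toFinset,
      (‖ann p b₁ J‖₊ : ℝ≥0∞) * (‖ann (flipIdx p) b₂ (I - J)‖₊ : ℝ≥0∞) ≤
        ((n : ℝ≥0∞) + 1)^2 * (N₁ * N₂) *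
          ((A p) ^ 2 * Dc ^ 2 * wF C₁ r₁ C₁' I) ^ (-(1/2) : ℝ) := by
    intro p J hJ
    have hJle : J ≤ I := by rwa [Multiset.mem_toFinset, Multiset.mem_powerset] at hJ
    have hc1 : (J.count p : ℝ≥0∞) + 1 ≤ (n : ℝ≥0∞) + 1 := by
      have : J.count p ≤ n := le_trans (Multiset.count_le_card p J)
        (Multiset.card_le_card hJle)
      exact add_le_add_left (by exact_mod_cast this) 1
    have hc2 : ((I - J).count (flipIdx p) : ℝ≥0∞) + 1 ≤ (n : ℝ≥0∞) + 1 := by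
      have : (I - J).count (flipIdx p) ≤ n := le_trans (Multiset.count_le_card _ _)
        (Multiset.card_le_card (Multiset.sub_le_self I J))
      exact add_le_add_left (by exact_mod_cast this) 1
    have hb1 := PB_coeff_le hC₁ hD b₁ h₁ (p ::ₘ J)
    have hb2 := PB_coeff_le hC₁ hD b₂ h₂ (flipIdx p ::ₘ (I - J))
    calc (‖ann p b₁ J‖₊ : ℝ≥0∞) * (‖ann (flipIdx p) b₂ (I - J)‖₊ : ℝ≥0∞)
        = (((J.count p : ℝ≥0∞) + 1) * (((I - J).count (flipIdx p) : ℝ≥0∞) + 1)) *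
            ((‖b₁ (p ::ₘ J)‖₊ : ℝ≥0∞) * (‖b₂ (flipIdx p ::ₘ (I - J))‖₊ : ℝ≥0∞)) := by
          rw [PB_ann_enorm, PB_ann_enorm]; ring
      _ ≤ (((n : ℝ≥0∞) + 1) * ((n : ℝ≥0∞) + 1)) *
            ((N₁ * (wF C₁ r₁ C₁' (p ::ₘ J)) ^ (-(1/2) : ℝ)) *
             (N₂ * (wF C₁ r₁ C₁' (flipIdx p ::ₘ (I - J))) ^ (-(1/2) : ℝ))) := by
          exact mul_le_mul' (mul_le_mul' hc1 hc2) (mul_le_mul' hb1 hb2)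
      _ = ((n : ℝ≥0∞) + 1)^2 * (N₁ * N₂) *
            ((wF C₁ r₁ C₁' (p ::ₘ J)) ^ (-(1/2) : ℝ) *
             (wF C₁ r₁ C₁' (flipIdx p ::ₘ (I - J))) ^ (-(1/2) : ℝ)) := by ring
      _ = ((n : ℝ≥0∞) + 1)^2 * (N₁ * N₂) *
            ((wF C₁ r₁ C₁' (p ::ₘ J) * wF C₁ r₁ C₁' (flipIdx p ::ₘ (I - J))) ^ (-(1/2) : ℝ)) := by
          rw [ENNReal.mul_rpow_of_ne_top (PB_wF_ne_top _) (PB_wF_ne_top _)]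
      _ = ((n : ℝ≥0∞) + 1)^2 * (N₁ * N₂) *
            ((A p) ^ 2 * Dc ^ 2 * wF C₁ r₁ C₁' I) ^ (-(1/2) : ℝ) := by
          rw [PB_wF_cons_pair hC₁ p (flipIdx p) rfl hJle]
  have hBp : ∀ p : HidaIdx m, B p ≤
      (2:ℝ≥0∞)^n * (((n : ℝ≥0∞) + 1)^2 * (N₁ * N₂) *
        ((A p) ^ 2 * Dc ^ 2 * wF C₁ r₁ C₁' I) ^ (-(1/2) : ℝ)) := by
    intro p
    refine le_trans (Finset.sum_le_card_nsmul _ _ _ (per_J p)) ?_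
    rw [nsmul_eq_mul]
    refine mul_le_mul_left ?_ _
    have hcard : I.powerset.toFinset.card ≤ 2 ^ n :=
      le_trans (Multiset.toFinset_card_le _) (le_of_eq (Multiset.card_powerset I))
    calc (I.powerset.toFinset.card : ℝ≥0∞) ≤ ((2^n : ℕ) : ℝ≥0∞) := by exact_mod_cast hcard
      _ = 2^n := by push_cast; ring
  have hAtop : ∀ p : HidaIdx m, A p ≠ ⊤ := fun p => ENNReal.ofReal_ne_top
  have hsplit : ∀ p : HidaIdx m, ((A p) ^ 2 * Dc ^ 2 * wF C₁ r₁ C₁' I) ^ (-(1/2) : ℝ) =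
      (A p)⁻¹ * Dc⁻¹ * (wF C₁ r₁ C₁' I) ^ (-(1/2) : ℝ) := by
    intro p
    have hsq : ∀ x : ℝ≥0∞, x ≠ ⊤ → (x ^ 2 : ℝ≥0∞) ^ (-(1/2) : ℝ) = x⁻¹ := by
      intro x hx
      rw [← ENNReal.rpow_natCast x 2, ← ENNReal.rpow_mul]
      norm_num
      exact ENNReal.rpow_neg_one x
    rw [ENNReal.mul_rpow_of_ne_top
        (ENNReal.mul_ne_top (ENNReal.pow_ne_top (hAtop p)) (ENNReal.pow_ne_top ENNReal.ofReal_ne_top))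
        (PB_wF_ne_top _),
      ENNReal.mul_rpow_of_ne_top (ENNReal.pow_ne_top (hAtop p)) (ENNReal.pow_ne_top ENNReal.ofReal_ne_top),
      hsq _ (hAtop p), hsq _ ENNReal.ofReal_ne_top]
  calc (‖poissonBracket Cω b₁ b₂ I‖₊ : ℝ≥0∞)
      ≤ ∑' p : HidaIdx m, ω p * B p := step1
    _ ≤ ∑' p : HidaIdx m, (ω p * (A p)⁻¹) *
          ((2:ℝ≥0∞)^n * (((n : ℝ≥0∞) + 1)^2 * (N₁ * N₂) * (Dc⁻¹ * (wF C₁ r₁ C₁' I) ^ (-(1/2) : ℝ)))) := by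
        refine ENNReal.tsum_le_tsum fun p => ?_
        refine le_trans (mul_le_mul_right (hBp p) (ω p)) (le_of_eq ?_)
        rw [hsplit p]
        ring
    _ = (∑' p : HidaIdx m, ω p * (A p)⁻¹) *
          ((2:ℝ≥0∞)^n * (((n : ℝ≥0∞) + 1)^2 * (N₁ * N₂) * (Dc⁻¹ * (wF C₁ r₁ C₁' I) ^ (-(1/2) : ℝ)))) :=
        ENNReal.tsum_mul_right
    _ = N₁ * N₂ * (∑' p : HidaIdx m, ω p * (A p)⁻¹) * ((n : ℝ≥0∞) + 1)^2 * 2^n *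
          Dc⁻¹ * (wF C₁ r₁ C₁' I) ^ (-(1/2) : ℝ) := by ring

end Pointwise

/-- Continuity of the Poisson bracket on the Hida test function space: for all `r, C`
there exist `r₁, C₁'` and `K` with `‖{F₁,F₂}‖_{r,C} ≤ K ‖F₁‖_{r₁,C₁'} ‖F₂‖_{r₁,C₁'}`. -/
theorem poissonBracket_continuous (m : ℕ) (C₁ Cω : ℝ) (hC₁ : 0 < C₁) (hCω : 0 < Cω) :
    ∀ r C : ℝ, 0 < r → 0 < C → ∃ r₁ C₁' : ℝ, ∃ K : ℝ≥0∞, 0 < r₁ ∧ 0 < C₁' ∧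
      0 < K ∧ K < ⊤ ∧
      ∀ b₁ b₂ : Multiset (HidaIdx m) → ℂ, memHida C₁ b₁ → memHida C₁ b₂ →
        fockNorm C₁ r C (poissonBracket Cω b₁ b₂) ≤
          K * fockNorm C₁ r₁ C₁' b₁ * fockNorm C₁ r₁ C₁' b₂ := by
  intro r C hr hC
  set r₁ : ℝ := r + 6 with hr₁def
  have hr₁ : 0 < r₁ := by rw [hr₁def]; linarith
  have hr₁2 : 2 ≤ r₁ / 2 := by rw [hr₁def]; linarith
  set Z : ℝ≥0∞ := ∑' k : ℤ, ENNReal.ofReal (((k:ℝ)) ^ 2 + 1)⁻¹ with hZdef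
  have hZ : Z ≠ ⊤ := PB_Z_lt_top.ne
  set mn : ℝ := min C₁ 1 with hmndef
  have hmn : 0 < mn := lt_min hC₁ one_pos
  have hz0 : 0 ≤ Z.toReal := ENNReal.toReal_nonneg
  set C₁' : ℝ := 256 * (C + 1) * ((m:ℝ) + 1) * (mn⁻¹ + 1) * (Z.toReal + 1) with hC₁'def
  have hD : 0 < C₁' := by rw [hC₁'def]; positivity
  set Dc : ℝ≥0∞ := ENNReal.ofReal C₁' with hDcdef
  have hDc0 : Dc ≠ 0 := (ENNReal.ofReal_pos.2 hD).ne'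
  have hDctop : Dc ≠ ⊤ := ENNReal.ofReal_ne_top
  set S : ℝ≥0∞ := ∑' p : HidaIdx m, ENNReal.ofReal (Cω * (p.1:ℝ)^2 + 1) *
      (ENNReal.ofReal ((C₁ * (p.1:ℝ)^2 + 1) ^ (r₁/2)))⁻¹ with hSdef
  have hS : S ≠ ⊤ := by
    have hle : S ≤ ((m * 2 : ℕ) : ℝ≥0∞) *
        (ENNReal.ofReal ((Cω + 1) * (mn ^ 2)⁻¹) * Z) := by
      rw [hSdef]
      calc ∑' p : HidaIdx m, ENNReal.ofReal (Cω * (p.1:ℝ)^2 + 1) *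
            (ENNReal.ofReal ((C₁ * (p.1:ℝ)^2 + 1) ^ (r₁/2)))⁻¹
          = ∑' p : HidaIdx m, ENNReal.ofReal
              ((Cω * (p.1:ℝ)^2 + 1) / (C₁ * (p.1:ℝ)^2 + 1) ^ (r₁/2)) := by
            refine tsum_congr fun p => ?_
            rw [ENNReal.ofReal_div_of_pos (Real.rpow_pos_of_pos (PB_base_pos hC₁ p.1) _)]
            conv_rhs => rw [div_eq_mul_inv]
        _ = ((m * 2 : ℕ) : ℝ≥0∞) * ∑' k : ℤ, ENNReal.ofReal
              ((Cω * (k:ℝ)^2 + 1) / (C₁ * (k:ℝ)^2 + 1) ^ (r₁/2)) :=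
            PB_tsum_fst (m := m)
              (fun k : ℤ => ENNReal.ofReal ((Cω * (k:ℝ)^2 + 1) / (C₁ * (k:ℝ)^2 + 1) ^ (r₁/2)))
        _ ≤ ((m * 2 : ℕ) : ℝ≥0∞) * ∑' k : ℤ, ENNReal.ofReal
              (((Cω + 1) * (mn ^ 2)⁻¹) * (((k:ℝ)) ^ 2 + 1)⁻¹) := by
            refine mul_le_mul_right (ENNReal.tsum_le_tsum fun k => ?_) _
            exact ENNReal.ofReal_le_ofReal (PB_S_term_le hC₁ hCω hr₁2 k)
        _ = ((m * 2 : ℕ) : ℝ≥0∞) * (ENNReal.ofReal ((Cω + 1) * (mn ^ 2)⁻¹) * Z) := by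
            rw [hZdef]
            congr 1
            rw [← ENNReal.tsum_mul_left]
            refine tsum_congr fun k => ?_
            rw [ENNReal.ofReal_mul (by positivity)]
    refine ne_top_of_le_ne_top ?_ hle
    exact ENNReal.mul_ne_top (ENNReal.natCast_ne_top _)
      (ENNReal.mul_ne_top ENNReal.ofReal_ne_top hZ)
  set K : ℝ≥0∞ := 2 * (S + 1) * Dc⁻¹ with hKdef
  have hK0 : 0 < K := by
    rw [hKdef]
    exact ENNReal.mul_pos (by simp) (ENNReal.inv_ne_zero.2 hDctop)
  have hKtop : K < ⊤ := by
    rw [hKdef, lt_top_iff_ne_top]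
    exact ENNReal.mul_ne_top
      (ENNReal.mul_ne_top (by simp) (by simp [ENNReal.add_ne_top, hS]))
      (ENNReal.inv_ne_top.2 hDc0)
  refine ⟨r₁, C₁', K, hr₁, hD, hK0, hKtop, ?_⟩
  intro b₁ b₂ hb₁ hb₂
  have h₁top : fockNormSq C₁ r₁ C₁' b₁ ≠ ⊤ := (hb₁ r₁ C₁' hr₁ hD).ne
  have h₂top : fockNormSq C₁ r₁ C₁' b₂ ≠ ⊤ := (hb₂ r₁ C₁' hr₁ hD).ne
  set N₁ := fockNorm C₁ r₁ C₁' b₁ with hN₁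
  set N₂ := fockNorm C₁ r₁ C₁' b₂ with hN₂
  set Cc : ℝ≥0∞ := ENNReal.ofReal C with hCcdef
  set g : HidaIdx m → ℝ≥0∞ :=
    fun x => ENNReal.ofReal ((C₁ * (x.1:ℝ)^2 + 1) ^ ((-6:ℝ)/2)) with hgdef
  set h : HidaIdx m → ℝ≥0∞ := fun x => (64 * Cc * Dc⁻¹) * g x with hhdef
  have sq_half : ∀ x : ℝ≥0∞, (x ^ (1/2:ℝ))^2 = x := by
    intro x
    rw [← ENNReal.rpow_natCast (x ^ (1/2:ℝ)) 2, ← ENNReal.rpow_mul]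
    norm_num
  have hW2 : ∀ x : ℝ≥0∞, (x ^ (-(1/2):ℝ))^2 = x⁻¹ := by
    intro x
    rw [← ENNReal.rpow_natCast (x ^ (-(1/2):ℝ)) 2, ← ENNReal.rpow_mul]
    norm_num
    exact ENNReal.rpow_neg_one x
  have hGN₁ : N₁^2 = fockNormSq C₁ r₁ C₁' b₁ := by rw [hN₁, fockNorm, sq_half]
  have hGN₂ : N₂^2 = fockNormSq C₁ r₁ C₁' b₂ := by rw [hN₂, fockNorm, sq_half]
  have h4 : ∀ n : ℕ, ((n : ℝ≥0∞) + 1)^4 ≤ 16^n := by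
    intro n
    have hnat : (n+1)^4 ≤ 16^n := by
      have h1 : n + 1 ≤ 2^n := Nat.succ_le_of_lt (Nat.lt_two_pow_self)
      calc (n+1)^4 ≤ (2^n)^4 := Nat.pow_le_pow_left h1 4
        _ = 16^n := by
            rw [← pow_mul, show (16:ℕ) = 2^4 from rfl, ← pow_mul, mul_comm]
    calc ((n : ℝ≥0∞)+1)^4 = (((n+1:ℕ)):ℝ≥0∞)^4 := by push_cast; ring
      _ ≤ ((16^n : ℕ) : ℝ≥0∞) := by exact_mod_cast hnat
      _ = 16^n := by push_cast; ring
  have h64 : ∀ n : ℕ, (16:ℝ≥0∞)^n * ((2:ℝ≥0∞)^n)^2 * Cc^n * (Dc⁻¹)^n =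
      (64 * Cc * Dc⁻¹)^n := by
    intro n
    have h2 : ((2:ℝ≥0∞)^n)^2 = 4^n := by
      rw [← pow_mul, mul_comm, pow_mul]
      norm_num
    rw [h2, ← mul_pow, ← mul_pow, ← mul_pow, show (16:ℝ≥0∞) * 4 = 64 by norm_num]
  -- the per-I bound
  have perI : ∀ I : Multiset (HidaIdx m),
      (‖poissonBracket Cω b₁ b₂ I‖₊ : ℝ≥0∞) ^ 2 * ENNReal.ofReal (hidaWeight C₁ r I) *
        Cc ^ Multiset.card I ≤
      (fockNormSq C₁ r₁ C₁' b₁ * fockNormSq C₁ r₁ C₁' b₂ * S^2 * (Dc⁻¹)^2) *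
        (I.map h).prod := by
    intro I
    set n := Multiset.card I with hn
    have hpw := PB_pointwise hC₁ hCω hD b₁ b₂ h₁top h₂top I
    have hWne0 : ENNReal.ofReal (hidaWeight C₁ r₁ I) ≠ 0 :=
      (ENNReal.ofReal_pos.2 (PB_hidaWeight_pos hC₁ I)).ne'
    have hWnetop : ENNReal.ofReal (hidaWeight C₁ r₁ I) ≠ ⊤ := ENNReal.ofReal_ne_top
    have hWinv : (wF C₁ r₁ C₁' I)⁻¹ * ENNReal.ofReal (hidaWeight C₁ r I) =
        ENNReal.ofReal (hidaWeight C₁ (-6) I) * (Dc⁻¹)^n := by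
      have hsplitW : ENNReal.ofReal (hidaWeight C₁ r I) =
          ENNReal.ofReal (hidaWeight C₁ r₁ I) * ENNReal.ofReal (hidaWeight C₁ (-6) I) := by
        have he : r - r₁ = -6 := by rw [hr₁def]; ring
        rw [PB_hidaWeight_split hC₁ r₁ I (s := r), he,
          ENNReal.ofReal_mul (PB_hidaWeight_nonneg hC₁ I)]
      rw [wF, ENNReal.mul_inv (Or.inl hWne0) (Or.inl hWnetop), hsplitW, ENNReal.inv_pow, ← hn]
      calc (ENNReal.ofReal (hidaWeight C₁ r₁ I))⁻¹ * (Dc⁻¹)^n *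
            (ENNReal.ofReal (hidaWeight C₁ r₁ I) * ENNReal.ofReal (hidaWeight C₁ (-6) I))
          = ((ENNReal.ofReal (hidaWeight C₁ r₁ I))⁻¹ * ENNReal.ofReal (hidaWeight C₁ r₁ I)) *
              (ENNReal.ofReal (hidaWeight C₁ (-6) I) * (Dc⁻¹)^n) := by ring
        _ = ENNReal.ofReal (hidaWeight C₁ (-6) I) * (Dc⁻¹)^n := by
            rw [ENNReal.inv_mul_cancel hWne0 hWnetop, one_mul]
    have hprodh : (I.map h).prod =
        (64 * Cc * Dc⁻¹)^n * ENNReal.ofReal (hidaWeight C₁ (-6) I) := by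
      have hg : ENNReal.ofReal (hidaWeight C₁ (-6) I) = (I.map g).prod := by
        rw [PB_ofReal_hidaWeight hC₁ (s := (-6:ℝ))]
      rw [hhdef, Multiset.prod_map_mul, Multiset.map_const', Multiset.prod_replicate, hg, hn]
    calc (‖poissonBracket Cω b₁ b₂ I‖₊ : ℝ≥0∞) ^ 2 * ENNReal.ofReal (hidaWeight C₁ r I) *
          Cc ^ n
        ≤ (N₁ * N₂ * S * ((n : ℝ≥0∞) + 1)^2 * 2^n * Dc⁻¹ *
            (wF C₁ r₁ C₁' I) ^ (-(1/2) : ℝ))^2 *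
            ENNReal.ofReal (hidaWeight C₁ r I) * Cc ^ n := by
          exact mul_le_mul_left (mul_le_mul_left (pow_le_pow_left' hpw 2) _) _
      _ = (N₁^2 * N₂^2 * S^2 * (Dc⁻¹)^2) * ((((n : ℝ≥0∞) + 1)^2)^2 * ((2:ℝ≥0∞)^n)^2 * Cc^n *
            (((wF C₁ r₁ C₁' I) ^ (-(1/2) : ℝ))^2 * ENNReal.ofReal (hidaWeight C₁ r I))) := by
          ring
      _ = (fockNormSq C₁ r₁ C₁' b₁ * fockNormSq C₁ r₁ C₁' b₂ * S^2 * (Dc⁻¹)^2) *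
            ((((n : ℝ≥0∞) + 1)^4 * ((2:ℝ≥0∞)^n)^2 * Cc^n) *
              (ENNReal.ofReal (hidaWeight C₁ (-6) I) * (Dc⁻¹)^n)) := by
          rw [hGN₁, hGN₂, hW2, hWinv, ← pow_mul]
      _ ≤ (fockNormSq C₁ r₁ C₁' b₁ * fockNormSq C₁ r₁ C₁' b₂ * S^2 * (Dc⁻¹)^2) *
            (((16:ℝ≥0∞)^n * ((2:ℝ≥0∞)^n)^2 * Cc^n) *
              (ENNReal.ofReal (hidaWeight C₁ (-6) I) * (Dc⁻¹)^n)) := by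
          exact mul_le_mul_right (mul_le_mul_left (mul_le_mul_left
            (mul_le_mul_left (h4 n) _) _) _) _
      _ = (fockNormSq C₁ r₁ C₁' b₁ * fockNormSq C₁ r₁ C₁' b₂ * S^2 * (Dc⁻¹)^2) *
            (I.map h).prod := by
          rw [hprodh, ← h64 n]
          ring
  -- geometric series bound
  have hσ : (∑' x : HidaIdx m, h x) ≤ 2⁻¹ := by
    have hT : (∑' x : HidaIdx m, g x) ≤ ((m * 2 : ℕ) : ℝ≥0∞) * (ENNReal.ofReal mn⁻¹ * Z) := by
      rw [hgdef]
      calc ∑' x : HidaIdx m, ENNReal.ofReal ((C₁ * (x.1:ℝ)^2 + 1) ^ ((-6:ℝ)/2))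
          = ((m * 2 : ℕ) : ℝ≥0∞) *
              ∑' k : ℤ, ENNReal.ofReal ((C₁ * (k:ℝ)^2 + 1) ^ ((-6:ℝ)/2)) :=
            PB_tsum_fst (m := m)
              (fun k : ℤ => ENNReal.ofReal ((C₁ * (k:ℝ)^2 + 1) ^ ((-6:ℝ)/2)))
        _ ≤ ((m * 2 : ℕ) : ℝ≥0∞) *
              ∑' k : ℤ, ENNReal.ofReal (mn⁻¹ * (((k:ℝ)) ^ 2 + 1)⁻¹) := by
            refine mul_le_mul_right (ENNReal.tsum_le_tsum fun k => ?_) _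
            exact ENNReal.ofReal_le_ofReal (PB_T_term_le hC₁ k)
        _ = ((m * 2 : ℕ) : ℝ≥0∞) * (ENNReal.ofReal mn⁻¹ * Z) := by
            rw [hZdef]
            congr 1
            rw [← ENNReal.tsum_mul_left]
            refine tsum_congr fun k => ?_
            rw [ENNReal.ofReal_mul (by positivity)]
    calc (∑' x : HidaIdx m, h x) = (64 * Cc * Dc⁻¹) * ∑' x : HidaIdx m, g x := by
          rw [hhdef]; exact ENNReal.tsum_mul_left
      _ ≤ (64 * Cc * Dc⁻¹) * (((m * 2 : ℕ) : ℝ≥0∞) * (ENNReal.ofReal mn⁻¹ * Z)) :=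
          mul_le_mul_right hT _
      _ = ENNReal.ofReal (64 * C * ((m * 2 : ℕ) : ℝ) * mn⁻¹ * Z.toReal) * Dc⁻¹ := by
          rw [hCcdef,
            ENNReal.ofReal_mul (by positivity : (0:ℝ) ≤ 64 * C * ((m*2:ℕ):ℝ) * mn⁻¹),
            ENNReal.ofReal_mul (by positivity : (0:ℝ) ≤ 64 * C * ((m*2:ℕ):ℝ)),
            ENNReal.ofReal_mul (by positivity : (0:ℝ) ≤ 64 * C),
            ENNReal.ofReal_mul (by norm_num : (0:ℝ) ≤ 64),
            ENNReal.ofReal_natCast, ENNReal.ofReal_ofNat, ENNReal.ofReal_toReal hZ]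
          ring
      _ = ENNReal.ofReal ((64 * C * ((m * 2 : ℕ) : ℝ) * mn⁻¹ * Z.toReal) / C₁') := by
          rw [ENNReal.ofReal_div_of_pos hD, div_eq_mul_inv, hDcdef]
      _ ≤ ENNReal.ofReal (1/2) := by
          refine ENNReal.ofReal_le_ofReal ?_
          rw [div_le_iff₀ hD]
          have key : C * ((m:ℝ)) * mn⁻¹ * Z.toReal ≤
              (C + 1) * ((m:ℝ) + 1) * (mn⁻¹ + 1) * (Z.toReal + 1) := by
            have h1 : C * ((m:ℝ)) ≤ (C + 1) * ((m:ℝ) + 1) := by nlinarith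
            have h2 : C * ((m:ℝ)) * mn⁻¹ ≤ (C + 1) * ((m:ℝ) + 1) * (mn⁻¹ + 1) := by
              have hinv : 0 < mn⁻¹ := by positivity
              nlinarith [mul_nonneg (le_of_lt hC) (Nat.cast_nonneg m : (0:ℝ) ≤ m)]
            nlinarith [mul_nonneg (mul_nonneg (le_of_lt hC)
              (Nat.cast_nonneg m : (0:ℝ) ≤ m)) (le_of_lt (show (0:ℝ) < mn⁻¹ by positivity))]
          rw [hC₁'def]
          push_cast
          nlinarith [key]
      _ ≤ 2⁻¹ := by
          rw [show (1/2 : ℝ) = (2:ℝ)⁻¹ by norm_num,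
            ENNReal.ofReal_inv_of_pos (by norm_num : (0:ℝ) < 2)]
          norm_num
  have hgeo : (∑' nn : ℕ, (∑' x : HidaIdx m, h x) ^ nn) ≤ 2 := by
    calc (∑' nn : ℕ, (∑' x : HidaIdx m, h x) ^ nn)
        ≤ ∑' nn : ℕ, (2⁻¹ : ℝ≥0∞) ^ nn := ENNReal.tsum_le_tsum fun nn => pow_le_pow_left' hσ nn
      _ = (1 - 2⁻¹)⁻¹ := ENNReal.tsum_geometric _
      _ = 2 := by rw [ENNReal.one_sub_inv_two, inv_inv]
  have main : fockNormSq C₁ r C (poissonBracket Cω b₁ b₂) ≤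
      (fockNormSq C₁ r₁ C₁' b₁ * fockNormSq C₁ r₁ C₁' b₂ * S^2 * (Dc⁻¹)^2) * 2 := by
    rw [fockNormSq]
    calc ∑' I : Multiset (HidaIdx m), (‖poissonBracket Cω b₁ b₂ I‖₊ : ℝ≥0∞) ^ 2 *
          ENNReal.ofReal (hidaWeight C₁ r I) * ENNReal.ofReal C ^ Multiset.card I
        ≤ ∑' I : Multiset (HidaIdx m),
            (fockNormSq C₁ r₁ C₁' b₁ * fockNormSq C₁ r₁ C₁' b₂ * S^2 * (Dc⁻¹)^2) *
            (I.map h).prod := ENNReal.tsum_le_tsum fun I => perI I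
      _ = (fockNormSq C₁ r₁ C₁' b₁ * fockNormSq C₁ r₁ C₁' b₂ * S^2 * (Dc⁻¹)^2) *
            ∑' I : Multiset (HidaIdx m), (I.map h).prod := ENNReal.tsum_mul_left
      _ ≤ (fockNormSq C₁ r₁ C₁' b₁ * fockNormSq C₁ r₁ C₁' b₂ * S^2 * (Dc⁻¹)^2) *
            ∑' nn : ℕ, (∑' x : HidaIdx m, h x) ^ nn :=
          mul_le_mul_right (PB_tsum_multiset_prod_le h) _
      _ ≤ _ := mul_le_mul_right hgeo _
  have hfinal2 : (fockNormSq C₁ r₁ C₁' b₁ * fockNormSq C₁ r₁ C₁' b₂ * S^2 * (Dc⁻¹)^2) * 2 ≤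
      (K * N₁ * N₂)^2 := by
    have hKsq : (K * N₁ * N₂)^2 = (4 * (S+1)^2 * (Dc⁻¹)^2) *
        (fockNormSq C₁ r₁ C₁' b₁ * fockNormSq C₁ r₁ C₁' b₂) := by
      rw [mul_pow, mul_pow, hGN₁, hGN₂, hKdef, mul_pow, mul_pow]
      norm_num
      ring
    rw [hKsq]
    calc (fockNormSq C₁ r₁ C₁' b₁ * fockNormSq C₁ r₁ C₁' b₂ * S^2 * (Dc⁻¹)^2) * 2
        = (2 * S^2) * ((Dc⁻¹)^2 * (fockNormSq C₁ r₁ C₁' b₁ * fockNormSq C₁ r₁ C₁' b₂)) := by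
          ring
      _ ≤ (4 * (S+1)^2) * ((Dc⁻¹)^2 * (fockNormSq C₁ r₁ C₁' b₁ * fockNormSq C₁ r₁ C₁' b₂)) := by
          refine mul_le_mul_left ?_ _
          exact mul_le_mul' (by norm_num) (pow_le_pow_left' le_self_add 2)
      _ = (4 * (S+1)^2 * (Dc⁻¹)^2) *
            (fockNormSq C₁ r₁ C₁' b₁ * fockNormSq C₁ r₁ C₁' b₂) := by ring
  calc fockNorm C₁ r C (poissonBracket Cω b₁ b₂)
      = (fockNormSq C₁ r C (poissonBracket Cω b₁ b₂)) ^ (1/2 : ℝ) := rfl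
    _ ≤ ((K * N₁ * N₂)^2) ^ (1/2 : ℝ) :=
        ENNReal.rpow_le_rpow (le_trans main hfinal2) (by norm_num)
    _ = K * N₁ * N₂ := by
        rw [← ENNReal.rpow_natCast (K * N₁ * N₂) 2, ← ENNReal.rpow_mul]
        norm_num
end

section
/- For each l ≥ 0, the l-th bidifferential operator P_l(F₁,F₂) = (1/l!) Σ Ω^{(k_1,i_1),(k'_1,i'_1)}···Ω^{(k_l,i_l),(k'_l,i'_l)} :a_{(k_1,i_1)}···a_{(k_l,i_l)}F₁ · a_{(k'_1,i'_1)}···a_{(k'_l,i'_l)}F₂: is continuous on the Hida test space: for all r, C there exist r₁, C₁, K with ‖P_l(F₁,F₂)‖_{r,C} ≤ K ‖F₁‖_{r₁,C₁} ‖F₂‖_{r₁,C₁}; moreover the key estimate is ‖P_l(F₁,F₂)‖²_{r,C} ≤ K (Σ_I w_{r₁}(I) C₁^{|I|} |I|^l |b¹_I|²)(Σ_I w_{r₁}(I) C₁^{|I|} |I|^l |b²_I|²), and Σ_I w_{r₁}(I)C₁^{|I|}|I|^l |b_I|² ≤ ‖F‖²_{r₁, C'_1} for C'_1 large enough. -/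
open scoped ENNReal

/-- Iterated annihilation `a_{p₁}⋯a_{p_l}` (for the multiset `s` of indices) acting on
coefficient families, with the combinatorial constants of the Bosonic Fock space. -/
noncomputable def annMany {β : Type*} [DecidableEq β] (s : Multiset (ℤ × β))
    (b : Multiset (ℤ × β) → ℂ) (J : Multiset (ℤ × β)) : ℂ :=
  (((s.map fun p => (J + s).count p).prod : ℕ) : ℂ) * b (J + s)

/-- The `l`-th Moyal-type bidifferential operator
`P_l(F₁,F₂) = (1/l!) Σ Ω^{(k₁,i₁),(k'₁,i'₁)}⋯Ω^{(k_l,i_l),(k'_l,i'_l)}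
:a_{(k₁,i₁)}⋯a_{(k_l,i_l)}F₁ · a_{(k'₁,i'₁)}⋯a_{(k'_l,i'_l)}F₂:` on coefficients. -/
noncomputable def Pl (Cω : ℝ) {m : ℕ} (l : ℕ)
    (b₁ b₂ : Multiset (HidaIdx m) → ℂ) (I : Multiset (HidaIdx m)) : ℂ :=
  (l.factorial : ℂ)⁻¹ * ∑' v : Fin l → HidaIdx m × HidaIdx m,
    (∏ j, (OmegaInv Cω (v j).1 (v j).2 : ℂ)) *
      ∑ J ∈ I.powerset.toFinset,
        annMany (↑(List.ofFn fun j => (v j).1)) b₁ J *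
        annMany (↑(List.ofFn fun j => (v j).2)) b₂ (I - J)

/-- The auxiliary weighted sum `Σ_I w_{r}(I) C^{|I|} |I|^l |b_I|²`. -/
noncomputable def weightedSumL {β : Type*} (C₁ r C : ℝ) (l : ℕ)
    (b : Multiset (ℤ × β) → ℂ) : ℝ≥0∞ :=
  ∑' I : Multiset (ℤ × β), (‖b I‖₊ : ℝ≥0∞) ^ 2 *
    ENNReal.ofReal (hidaWeight C₁ r I) * ENNReal.ofReal C ^ Multiset.card I *
      (Multiset.card I : ℝ≥0∞) ^ l

namespace PlAux

open ENNReal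

/-! ### Generic `ℝ≥0∞` lemmas -/

section Generic

variable {ι : Type*}

lemma rpow_half_sq (a : ℝ≥0∞) : (a ^ (1/2:ℝ)) ^ (2:ℕ) = a := by
  rw [← ENNReal.rpow_natCast (a ^ (1/2:ℝ)) 2, ← ENNReal.rpow_mul]
  norm_num

lemma tsum_CS (f g : ι → ℝ≥0∞) :
    ∑' i, f i * g i ≤ (∑' i, f i ^ (2:ℕ)) ^ (1/2:ℝ) * (∑' i, g i ^ (2:ℕ)) ^ (1/2:ℝ) := by
  rw [ENNReal.tsum_eq_iSup_sum]
  refine iSup_le fun s => ?_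
  have h2 : (2:ℝ).HolderConjugate 2 := by constructor <;> norm_num
  calc ∑ i ∈ s, f i * g i
      ≤ (∑ i ∈ s, f i ^ (2:ℝ)) ^ (1/2:ℝ) * (∑ i ∈ s, g i ^ (2:ℝ)) ^ (1/2:ℝ) :=
        ENNReal.inner_le_Lp_mul_Lq s f g h2
    _ ≤ _ := by
        have hc : ∀ (h : ι → ℝ≥0∞), ∑ i ∈ s, h i ^ (2:ℝ) ≤ ∑' i, h i ^ (2:ℕ) := by
          intro h
          have : ∀ i, h i ^ (2:ℝ) = h i ^ (2:ℕ) := fun i => by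
            rw [← ENNReal.rpow_natCast (h i) 2]; norm_num
          simp_rw [this]
          exact ENNReal.sum_le_tsum s
        gcongr <;> [exact hc f; exact hc g]

lemma sq_tsum_le {x u w : ι → ℝ≥0∞} (h : ∀ i, x i ^ (2:ℕ) ≤ u i * w i) :
    (∑' i, x i) ^ (2:ℕ) ≤ (∑' i, u i) * (∑' i, w i) := by
  have h1 : ∀ i, x i ≤ u i ^ (1/2:ℝ) * w i ^ (1/2:ℝ) := by
    intro i
    have := ENNReal.rpow_le_rpow (h i) (by norm_num : (0:ℝ) ≤ 1/2)
    rwa [ENNReal.mul_rpow_of_nonneg _ _ (by norm_num), ← ENNReal.rpow_natCast (x i) 2,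
      ← ENNReal.rpow_mul, (by norm_num : ((2:ℕ):ℝ) * (1/2) = (1:ℝ)), ENNReal.rpow_one] at this
  calc (∑' i, x i) ^ (2:ℕ) ≤ (∑' i, u i ^ (1/2:ℝ) * w i ^ (1/2:ℝ)) ^ (2:ℕ) := by
        gcongr with i
        exact h1 i
    _ ≤ ((∑' i, (u i ^ (1/2:ℝ)) ^ (2:ℕ)) ^ (1/2:ℝ) * (∑' i, (w i ^ (1/2:ℝ)) ^ (2:ℕ)) ^ (1/2:ℝ)) ^ (2:ℕ) := by
        gcongr
        exact tsum_CS _ _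
    _ = _ := by
        simp_rw [rpow_half_sq]
        rw [mul_pow, rpow_half_sq, rpow_half_sq]

lemma enn_nnnorm_tsum_le (f : ι → ℂ) : (‖∑' i, f i‖₊ : ℝ≥0∞) ≤ ∑' i, (‖f i‖₊ : ℝ≥0∞) := by
  by_cases h2 : Summable fun n => ‖f n‖₊
  · rw [← ENNReal.coe_tsum h2]
    exact ENNReal.coe_le_coe.2 (nnnorm_tsum_le h2)
  · have : ∑' i, (‖f i‖₊ : ℝ≥0∞) = ⊤ := by
      by_contra hne
      exact h2 (ENNReal.tsum_coe_ne_top_iff_summable.1 hne)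
    simp [this]

lemma tsum_pi_prod {Y : Type*} (l : ℕ) (h : Y → ℝ≥0∞) :
    ∑' v : Fin l → Y, ∏ j, h (v j) = (∑' y, h y) ^ l := by
  induction l with
  | zero =>
      rw [pow_zero]
      rw [tsum_eq_single (fun i => i.elim0) (fun v hv => absurd (Subsingleton.elim v _) hv)]
      simp
  | succ n ih =>
      rw [← (Fin.consEquiv fun _ => Y).tsum_eq (fun v => ∏ j, h (v j)), ENNReal.tsum_prod']
      have : ∀ (y : Y) (w : Fin n → Y),
          (∏ j, h ((Fin.consEquiv fun _ => Y) (y, w) j)) = h y * ∏ j, h (w j) := by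
        intro y w
        rw [Fin.prod_univ_succ]
        simp [Fin.consEquiv]
      simp_rw [this, ENNReal.tsum_mul_left, ENNReal.tsum_mul_right, ih, pow_succ]
      ring

lemma tsum_powerset {α : Type*} [DecidableEq α] (F : Multiset α → Multiset α → ℝ≥0∞) :
    ∑' I : Multiset α, ∑ J ∈ I.powerset.toFinset, F J (I - J)
      = ∑' p : Multiset α × Multiset α, F p.1 p.2 := by
  have h1 : ∀ I : Multiset α, ∑ J ∈ I.powerset.toFinset, F J (I - J)
      = ∑' J : I.powerset.toFinset, F (J:Multiset α) (I - J) := fun I =>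
    (Finset.tsum_subtype _ _).symm
  simp_rw [h1]
  have hle : ∀ σ : (Σ I : Multiset α, I.powerset.toFinset), (σ.2 : Multiset α) ≤ σ.1 := by
    rintro ⟨I, J, hJ⟩
    rwa [Multiset.mem_toFinset, Multiset.mem_powerset] at hJ
  let f : (Σ I : Multiset α, I.powerset.toFinset) → Multiset α × Multiset α :=
    fun σ => ((σ.2 : Multiset α), σ.1 - σ.2)
  have hbij : Function.Bijective f := by
    constructor
    · rintro ⟨I, J, hJ⟩ ⟨I', J', hJ'⟩ hEq
      simp only [f, Prod.mk.injEq] at hEq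
      obtain ⟨h1', h2'⟩ := hEq
      have hJle : (J : Multiset α) ≤ I := hle ⟨I, J, hJ⟩
      have hJle' : (J' : Multiset α) ≤ I' := hle ⟨I', J', hJ'⟩
      have hI : I = I' := by
        rw [← add_tsub_cancel_of_le hJle, ← add_tsub_cancel_of_le hJle', h2', h1']
      subst hI; subst h1'; rfl
    · rintro ⟨J, K⟩
      refine ⟨⟨J + K, ⟨J, ?_⟩⟩, ?_⟩
      · rw [Multiset.mem_toFinset, Multiset.mem_powerset]
        exact le_add_right le_rfl
      · simp [f, add_tsub_cancel_left]
  have h2 := ENNReal.tsum_sigma'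
    (f := fun σ : (Σ I : Multiset α, I.powerset.toFinset) => F (σ.2 : Multiset α) (σ.1 - σ.2))
  have h3 := (Equiv.ofBijective f hbij).tsum_eq (fun p : Multiset α × Multiset α => F p.1 p.2)
  exact h2.symm.trans h3

end Generic

/-! ### Weights -/

section Weights

variable {β : Type*} {C₁ r r' : ℝ}

noncomputable def ek (C₁ : ℝ) (k : ℤ) : ℝ := C₁ * (k:ℝ)^2 + 1

lemma one_le_ek (hC₁ : 0 < C₁) (k : ℤ) : 1 ≤ ek C₁ k := by
  have : 0 ≤ C₁ * (k:ℝ)^2 := by positivity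
  simp [ek]; linarith

lemma ek_pos (hC₁ : 0 < C₁) (k : ℤ) : 0 < ek C₁ k :=
  lt_of_lt_of_le one_pos (one_le_ek hC₁ k)

lemma hidaWeight_def' (I : Multiset (ℤ × β)) :
    hidaWeight C₁ r I = (I.map (fun p => (ek C₁ p.1) ^ (r / 2))).prod := rfl

lemma hidaWeight_pos (hC₁ : 0 < C₁) (I : Multiset (ℤ × β)) : 0 < hidaWeight C₁ r I := by
  rw [hidaWeight_def']
  refine Multiset.prod_pos fun a ha => ?_
  obtain ⟨p, _, rfl⟩ := Multiset.mem_map.1 ha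
  exact Real.rpow_pos_of_pos (ek_pos hC₁ _) _

lemma one_le_hidaWeight (hC₁ : 0 < C₁) (hr : 0 ≤ r) (I : Multiset (ℤ × β)) :
    1 ≤ hidaWeight C₁ r I := by
  induction I using Multiset.induction with
  | empty => simp [hidaWeight]
  | cons p I ih =>
      rw [hidaWeight_def', Multiset.map_cons, Multiset.prod_cons, ← hidaWeight_def']
      have h1 : 1 ≤ (ek C₁ p.1) ^ (r/2) := Real.one_le_rpow (one_le_ek hC₁ _) (by positivity)
      nlinarith

lemma hidaWeight_add (J K : Multiset (ℤ × β)) :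
    hidaWeight C₁ r (J + K) = hidaWeight C₁ r J * hidaWeight C₁ r K := by
  simp [hidaWeight, Multiset.map_add, Multiset.prod_add]

lemma hidaWeight_mono (hC₁ : 0 < C₁) (hrr : r ≤ r') (I : Multiset (ℤ × β)) :
    hidaWeight C₁ r I ≤ hidaWeight C₁ r' I := by
  induction I using Multiset.induction with
  | empty => simp [hidaWeight]
  | cons p I ih =>
      rw [hidaWeight_def', Multiset.map_cons, Multiset.prod_cons, ← hidaWeight_def',
        hidaWeight_def' (r := r'), Multiset.map_cons, Multiset.prod_cons, ← hidaWeight_def']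
      have h1 : (ek C₁ p.1) ^ (r/2) ≤ (ek C₁ p.1) ^ (r'/2) :=
        Real.rpow_le_rpow_of_exponent_le (one_le_ek hC₁ _) (by linarith)
      have h2 : (0:ℝ) < (ek C₁ p.1) ^ (r/2) := Real.rpow_pos_of_pos (ek_pos hC₁ _) _
      have h3 := hidaWeight_pos (r := r) hC₁ I
      nlinarith

lemma hidaWeight_coe_ofFn {n : ℕ} (f : Fin n → ℤ × β) :
    hidaWeight C₁ r ((List.ofFn f : List (ℤ × β)) : Multiset (ℤ × β)) = ∏ j, (ek C₁ (f j).1) ^ (r / 2) := by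
  rw [hidaWeight_def', Multiset.map_coe, Multiset.prod_coe, List.map_ofFn, List.prod_ofFn]
  rfl

end Weights

/-! ### Omega facts and summability -/

section Omega

variable {m : ℕ}

def flipIdx (p : HidaIdx m) : HidaIdx m := (p.1, (p.2.1, !p.2.2))

lemma OmegaInv_eq_zero {Cω : ℝ} {p q : HidaIdx m} (h : q ≠ flipIdx p) :
    OmegaInv Cω p q = 0 := by
  obtain ⟨k, i, b⟩ := p
  obtain ⟨k', i', b'⟩ := q
  rw [OmegaInv]
  by_cases h1 : k = k' ∧ i = i'
  · obtain ⟨rfl, rfl⟩ := h1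
    have hb : b' ≠ !b := by
      intro hb; exact h (by simp [flipIdx, hb])
    rcases b <;> rcases b' <;> simp_all [flipIdx]
  · simp [h1]

lemma omega_bound {C₁ Cω : ℝ} (hC₁ : 0 < C₁) (hCω : 0 < Cω) (p q : HidaIdx m) :
    (‖(OmegaInv Cω p q : ℂ)‖₊ : ℝ≥0∞) ≤
      ENNReal.ofReal (max (Cω/C₁) 1 * ek C₁ p.1) * (if q = flipIdx p then 1 else 0) := by
  by_cases h : q = flipIdx p
  · rw [if_pos h, mul_one, Complex.nnnorm_real, ← enorm_eq_nnnorm, Real.enorm_eq_ofReal_abs]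
    apply ENNReal.ofReal_le_ofReal
    have habs : |OmegaInv Cω p q| ≤ Cω * (p.1:ℝ)^2 + 1 := by
      have hpos : 0 ≤ Cω * (p.1:ℝ)^2 + 1 := by positivity
      rw [OmegaInv]
      split
      · split
        · rw [abs_neg, abs_of_nonneg hpos]
        · split
          · rw [abs_of_nonneg hpos]
          · simpa using hpos
      · simpa using hpos
    refine le_trans habs ?_
    have h1 : (1:ℝ) ≤ max (Cω/C₁) 1 := le_max_right _ _
    have h2 : Cω / C₁ ≤ max (Cω/C₁) 1 := le_max_left _ _
    have hk : (0:ℝ) ≤ (p.1:ℝ)^2 := sq_nonneg _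
    have : Cω * (p.1:ℝ)^2 = (Cω / C₁) * (C₁ * (p.1:ℝ)^2) := by
      field_simp [hC₁.ne']
    rw [ek]
    nlinarith [mul_le_mul_of_nonneg_right h2 (mul_nonneg hC₁.le hk)]
  · rw [OmegaInv_eq_zero h]
    simp

lemma sum_inv_ek_lt_top {C₁ : ℝ} (hC₁ : 0 < C₁) :
    ∑' k : ℤ, ENNReal.ofReal ((ek C₁ k)⁻¹) < ⊤ := by
  have hbase : Summable (fun n : ℕ => 1 / (n:ℝ)^2) := Real.summable_one_div_nat_pow.2 one_lt_two
  have h1 : Summable (fun n : ℕ => 1 / ((n:ℝ)+1)^2) := by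
    have := (summable_nat_add_iff 1).2 hbase
    simpa using this
  have hnat : Summable (fun n : ℕ => (ek C₁ n)⁻¹) := by
    rw [← summable_nat_add_iff 1]
    refine Summable.of_nonneg_of_le (fun n => inv_nonneg.2 (ek_pos hC₁ _).le) (fun n => ?_) (h1.mul_left C₁⁻¹)
    have hp : (0:ℝ) < C₁ * ((n:ℝ)+1)^2 := by positivity
    have hle : C₁ * ((n:ℝ)+1)^2 ≤ ek C₁ ((n:ℤ)+1) := by
      rw [ek]; push_cast; nlinarith
    calc (ek C₁ ((n:ℕ)+1:ℕ))⁻¹ = (ek C₁ ((n:ℤ)+1))⁻¹ := by norm_cast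
      _ ≤ (C₁ * ((n:ℝ)+1)^2)⁻¹ := by
          apply inv_anti₀ hp hle
      _ = C₁⁻¹ * (1 / ((n:ℝ)+1)^2) := by field_simp
  have hsum : Summable (fun k : ℤ => (ek C₁ k)⁻¹) := by
    refine Summable.of_nat_of_neg hnat ?_
    refine hnat.congr fun n => ?_
    simp [ek]
  rw [← ENNReal.ofReal_tsum_of_nonneg (fun k => inv_nonneg.2 (ek_pos hC₁ _).le) hsum]
  exact ENNReal.ofReal_lt_top

lemma tsum_hida_lt_top {c : ℤ → ℝ≥0∞} (h : ∑' k, c k < ⊤) (m : ℕ) :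
    ∑' p : HidaIdx m, c p.1 < ⊤ := by
  have : ∑' p : HidaIdx m, c p.1 = ∑' k : ℤ, ∑' u : Fin m × Bool, c k := ENNReal.tsum_prod'
  rw [this]
  simp_rw [tsum_fintype, Finset.sum_const, nsmul_eq_mul]
  rw [ENNReal.tsum_mul_left]
  have h1 : ((Fintype.card (Fin m × Bool) : ℝ≥0∞)) < ⊤ := by
    rw [lt_top_iff_ne_top]
    exact ENNReal.natCast_ne_top _
  exact ENNReal.mul_lt_top h1 h

lemma tsum_flip {c : HidaIdx m → ℝ≥0∞} (p : HidaIdx m) :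
    ∑' q : HidaIdx m, (if q = flipIdx p then 1 else 0) * c q = c (flipIdx p) := by
  rw [tsum_eq_single (flipIdx p) (fun q hq => by rw [if_neg hq, zero_mul])]
  rw [if_pos rfl, one_mul]

end Omega

/-! ### Step 1: pointwise bound on `Pl` -/

section Step1

variable {m : ℕ}

lemma annBound {β : Type*} [DecidableEq β] (s : Multiset (ℤ × β)) (b : Multiset (ℤ × β) → ℂ)
    (J : Multiset (ℤ × β)) :
    (‖annMany s b J‖₊ : ℝ≥0∞) ≤
      (((Multiset.card J + Multiset.card s : ℕ)) : ℝ≥0∞) ^ (Multiset.card s) *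
        (‖b (J + s)‖₊ : ℝ≥0∞) := by
  have hn : (s.map fun p => (J + s).count p).prod
      ≤ (Multiset.card J + Multiset.card s) ^ (Multiset.card s) := by
    have hb : ∀ x ∈ (s.map fun p => (J + s).count p), x ≤ Multiset.card J + Multiset.card s := by
      intro x hx
      obtain ⟨p, _, rfl⟩ := Multiset.mem_map.1 hx
      calc (J + s).count p ≤ Multiset.card (J + s) := Multiset.count_le_card _ _
        _ = Multiset.card J + Multiset.card s := Multiset.card_add _ _
    have := Multiset.prod_le_pow_card _ _ hb
    rwa [Multiset.card_map] at this
  rw [annMany, nnnorm_mul, ENNReal.coe_mul]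
  gcongr
  have h1 : (‖(((s.map fun p => (J + s).count p).prod : ℕ) : ℂ)‖₊ : ℝ≥0∞)
      = (((s.map fun p => (J + s).count p).prod : ℕ) : ℝ≥0∞) := by
    rw [RCLike.nnnorm_natCast, ENNReal.coe_natCast]
  rw [h1]
  exact_mod_cast hn

lemma card_coe_ofFn {β : Type*} {l : ℕ} (f : Fin l → ℤ × β) :
    Multiset.card ((List.ofFn f : List (ℤ × β)) : Multiset (ℤ × β)) = l := by
  rw [Multiset.coe_card, List.length_ofFn]

lemma step1 (Cω : ℝ) (l : ℕ) (b₁ b₂ : Multiset (HidaIdx m) → ℂ) (I : Multiset (HidaIdx m)) :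
    (‖Pl Cω l b₁ b₂ I‖₊ : ℝ≥0∞) ≤
      ∑' v : Fin l → HidaIdx m × HidaIdx m,
        ∑ J ∈ I.powerset.toFinset,
          ((∏ j, (‖(OmegaInv Cω (v j).1 (v j).2 : ℂ)‖₊ : ℝ≥0∞)) *
              (((Multiset.card J + l : ℕ)) : ℝ≥0∞) ^ l *
              (((Multiset.card (I - J) + l : ℕ)) : ℝ≥0∞) ^ l) *
            ((‖b₁ (J + ↑(List.ofFn fun j => (v j).1))‖₊ : ℝ≥0∞) *
              (‖b₂ ((I - J) + ↑(List.ofFn fun j => (v j).2))‖₊ : ℝ≥0∞)) := by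
  rw [Pl, nnnorm_mul, ENNReal.coe_mul]
  have hfact : (‖((l.factorial : ℂ))⁻¹‖₊ : ℝ≥0∞) ≤ 1 := by
    rw [nnnorm_inv, RCLike.nnnorm_natCast]
    rw [ENNReal.coe_inv (by exact_mod_cast l.factorial_pos.ne')]
    rw [ENNReal.inv_le_one]
    exact_mod_cast l.factorial_pos
  calc _ ≤ 1 * (‖∑' v : Fin l → HidaIdx m × HidaIdx m,
        (∏ j, (OmegaInv Cω (v j).1 (v j).2 : ℂ)) *
          ∑ J ∈ I.powerset.toFinset,
            annMany (↑(List.ofFn fun j => (v j).1)) b₁ J *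
            annMany (↑(List.ofFn fun j => (v j).2)) b₂ (I - J)‖₊ : ℝ≥0∞) := by
        gcongr
    _ ≤ _ := by
        rw [one_mul]
        refine le_trans (enn_nnnorm_tsum_le _) ?_
        refine Summable.tsum_le_tsum (fun v => ?_) ENNReal.summable ENNReal.summable
        rw [nnnorm_mul, ENNReal.coe_mul, nnnorm_prod]
        push_cast [ENNReal.coe_finset_prod]
        calc _ ≤ (∏ j, (‖(OmegaInv Cω (v j).1 (v j).2 : ℂ)‖₊ : ℝ≥0∞)) *
            ∑ J ∈ I.powerset.toFinset,
              (‖annMany (↑(List.ofFn fun j => (v j).1)) b₁ J‖₊ : ℝ≥0∞) *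
              (‖annMany (↑(List.ofFn fun j => (v j).2)) b₂ (I - J)‖₊ : ℝ≥0∞) := by
              gcongr
              refine le_trans (ENNReal.coe_le_coe.2 (nnnorm_sum_le _ _)) ?_
              rw [ENNReal.coe_finset_sum]
              refine Finset.sum_le_sum fun J _ => ?_
              rw [nnnorm_mul, ENNReal.coe_mul]
          _ ≤ _ := by
              rw [Finset.mul_sum]
              refine Finset.sum_le_sum fun J _ => ?_
              calc (∏ j, (‖(OmegaInv Cω (v j).1 (v j).2 : ℂ)‖₊ : ℝ≥0∞)) *
                  ((‖annMany (↑(List.ofFn fun j => (v j).1)) b₁ J‖₊ : ℝ≥0∞) *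
                    (‖annMany (↑(List.ofFn fun j => (v j).2)) b₂ (I - J)‖₊ : ℝ≥0∞))
                  ≤ (∏ j, (‖(OmegaInv Cω (v j).1 (v j).2 : ℂ)‖₊ : ℝ≥0∞)) *
                    (((((Multiset.card J + l : ℕ)) : ℝ≥0∞) ^ l *
                        (‖b₁ (J + ↑(List.ofFn fun j => (v j).1))‖₊ : ℝ≥0∞)) *
                      ((((Multiset.card (I - J) + l : ℕ)) : ℝ≥0∞) ^ l *
                        (‖b₂ ((I - J) + ↑(List.ofFn fun j => (v j).2))‖₊ : ℝ≥0∞))) := by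
                    gcongr ?_ * (?_ * ?_)
                    · exact le_rfl
                    · have := annBound (↑(List.ofFn fun j => (v j).1)) b₁ J
                      rwa [card_coe_ofFn] at this
                    · have := annBound (↑(List.ofFn fun j => (v j).2)) b₂ (I - J)
                      rwa [card_coe_ofFn] at this
                _ = _ := by push_cast; ring
        done

end Step1

/-! ### CS weights -/

section Weights2

variable {m : ℕ}

noncomputable def psiP (C₁ : ℝ) (pq : HidaIdx m × HidaIdx m) : ℝ≥0∞ :=
  ENNReal.ofReal ((ek C₁ pq.1.1)⁻¹) * (if pq.2 = flipIdx pq.1 then 1 else 0)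

noncomputable def bigB (C₁ Cω : ℝ) (pq : HidaIdx m × HidaIdx m) : ℝ≥0∞ :=
  ENNReal.ofReal ((max (Cω/C₁) 1)^2 * (ek C₁ pq.1.1)^3) * (if pq.2 = flipIdx pq.1 then 1 else 0)

lemma omega_sq_le {C₁ Cω : ℝ} (hC₁ : 0 < C₁) (hCω : 0 < Cω) (pq : HidaIdx m × HidaIdx m) :
    (‖(OmegaInv Cω pq.1 pq.2 : ℂ)‖₊ : ℝ≥0∞) ^ (2:ℕ) ≤ psiP C₁ pq * bigB C₁ Cω pq := by
  by_cases h : pq.2 = flipIdx pq.1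
  · have h1 := omega_bound hC₁ hCω pq.1 pq.2
    rw [if_pos h, mul_one] at h1
    have hek := ek_pos hC₁ pq.1.1
    calc (‖(OmegaInv Cω pq.1 pq.2 : ℂ)‖₊ : ℝ≥0∞) ^ (2:ℕ)
        ≤ (ENNReal.ofReal (max (Cω/C₁) 1 * ek C₁ pq.1.1)) ^ (2:ℕ) := by gcongr
      _ = ENNReal.ofReal ((ek C₁ pq.1.1)⁻¹) *
            ENNReal.ofReal ((max (Cω/C₁) 1)^2 * (ek C₁ pq.1.1)^3) := by
          rw [← ENNReal.ofReal_pow (by positivity), ← ENNReal.ofReal_mul (by positivity)]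
          congr 1
          field_simp
      _ = psiP C₁ pq * bigB C₁ Cω pq := by
          rw [psiP, bigB, if_pos h, mul_one, mul_one]
  · rw [OmegaInv_eq_zero h]
    simp

lemma Psi_lt_top {C₁ : ℝ} (hC₁ : 0 < C₁) (m : ℕ) :
    ∑' pq : HidaIdx m × HidaIdx m, psiP C₁ pq < ⊤ := by
  rw [ENNReal.tsum_prod']
  have h1 : ∀ p : HidaIdx m, ∑' q : HidaIdx m, psiP C₁ (p, q)
      = ENNReal.ofReal ((ek C₁ p.1)⁻¹) := by
    intro p
    simp only [psiP]
    rw [ENNReal.tsum_mul_left, tsum_ite_eq (flipIdx p) (fun _ => (1:ℝ≥0∞)), mul_one]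
  simp_rw [h1]
  exact tsum_hida_lt_top (sum_inv_ek_lt_top hC₁) m

lemma Phi_lt_top {C₁ Cω r₁ : ℝ} (hC₁ : 0 < C₁) (hCω : 0 < Cω) (hr₁ : 4 ≤ r₁) (m : ℕ) :
    ∑' pq : HidaIdx m × HidaIdx m, bigB C₁ Cω pq *
      ENNReal.ofReal ((ek C₁ pq.1.1) ^ (-(r₁/2))) *
      ENNReal.ofReal ((ek C₁ pq.2.1) ^ (-(r₁/2))) < ⊤ := by
  rw [ENNReal.tsum_prod']
  have h1 : ∀ p : HidaIdx m, ∑' q : HidaIdx m, (bigB C₁ Cω (p, q) *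
        ENNReal.ofReal ((ek C₁ p.1) ^ (-(r₁/2))) *
        ENNReal.ofReal ((ek C₁ q.1) ^ (-(r₁/2))))
      ≤ ENNReal.ofReal ((max (Cω/C₁) 1)^2) * ENNReal.ofReal ((ek C₁ p.1)⁻¹) := by
    intro p
    rw [tsum_eq_single (flipIdx p) (fun q hq => by
      simp only [bigB, if_neg hq, mul_zero, zero_mul])]
    rw [bigB, if_pos rfl, mul_one]
    have hflip : (flipIdx p).1 = p.1 := rfl
    rw [hflip]
    have hek := ek_pos hC₁ p.1
    have h1le := one_le_ek hC₁ p.1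
    rw [← ENNReal.ofReal_mul (by positivity), ← ENNReal.ofReal_mul (by positivity),
      ← ENNReal.ofReal_mul (by positivity)]
    apply ENNReal.ofReal_le_ofReal
    have hkey : (ek C₁ p.1)^3 * (ek C₁ p.1) ^ (-(r₁/2)) * (ek C₁ p.1) ^ (-(r₁/2))
        ≤ (ek C₁ p.1)⁻¹ := by
      have e1 : (ek C₁ p.1)^3 = (ek C₁ p.1) ^ ((3:ℕ):ℝ) := by
        rw [Real.rpow_natCast]
      rw [e1, ← Real.rpow_add hek, ← Real.rpow_add hek]
      calc (ek C₁ p.1) ^ (((3:ℕ):ℝ) + -(r₁/2) + -(r₁/2))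
          ≤ (ek C₁ p.1) ^ (-1:ℝ) := by
            apply Real.rpow_le_rpow_of_exponent_le h1le
            push_cast; linarith
        _ = (ek C₁ p.1)⁻¹ := by
            rw [Real.rpow_neg_one]
    calc (max (Cω/C₁) 1)^2 * (ek C₁ p.1)^3 * (ek C₁ p.1) ^ (-(r₁/2)) * (ek C₁ p.1) ^ (-(r₁/2))
        = (max (Cω/C₁) 1)^2 * ((ek C₁ p.1)^3 * (ek C₁ p.1) ^ (-(r₁/2)) * (ek C₁ p.1) ^ (-(r₁/2))) := by ring
      _ ≤ (max (Cω/C₁) 1)^2 * (ek C₁ p.1)⁻¹ := by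
          have hmax : (0:ℝ) ≤ (max (Cω/C₁) 1)^2 := by positivity
          exact mul_le_mul_of_nonneg_left hkey hmax
  calc ∑' p : HidaIdx m, ∑' q : HidaIdx m, (bigB C₁ Cω (p, q) *
        ENNReal.ofReal ((ek C₁ p.1) ^ (-(r₁/2))) *
        ENNReal.ofReal ((ek C₁ q.1) ^ (-(r₁/2))))
      ≤ ∑' p : HidaIdx m, ENNReal.ofReal ((max (Cω/C₁) 1)^2) * ENNReal.ofReal ((ek C₁ p.1)⁻¹) :=
        Summable.tsum_le_tsum h1 ENNReal.summable ENNReal.summable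
    _ < ⊤ := by
        rw [ENNReal.tsum_mul_left]
        exact ENNReal.mul_lt_top ENNReal.ofReal_lt_top (tsum_hida_lt_top (sum_inv_ek_lt_top hC₁) m)

end Weights2

/-! ### Step 2: Cauchy-Schwarz in the pair variables -/

section Step2

variable {m : ℕ}

lemma step2 {C₁ Cω : ℝ} (hC₁ : 0 < C₁) (hCω : 0 < Cω) (l : ℕ)
    (b₁ b₂ : Multiset (HidaIdx m) → ℂ) (I : Multiset (HidaIdx m)) :
    (∑' v : Fin l → HidaIdx m × HidaIdx m,
        ∑ J ∈ I.powerset.toFinset,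
          ((∏ j, (‖(OmegaInv Cω (v j).1 (v j).2 : ℂ)‖₊ : ℝ≥0∞)) *
              (((Multiset.card J + l : ℕ)) : ℝ≥0∞) ^ l *
              (((Multiset.card (I - J) + l : ℕ)) : ℝ≥0∞) ^ l) *
            ((‖b₁ (J + ↑(List.ofFn fun j => (v j).1))‖₊ : ℝ≥0∞) *
              (‖b₂ ((I - J) + ↑(List.ofFn fun j => (v j).2))‖₊ : ℝ≥0∞))) ^ (2:ℕ)
      ≤ ((∑' pq : HidaIdx m × HidaIdx m, psiP C₁ pq) ^ l * 2 ^ (Multiset.card I)) *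
        ∑' v : Fin l → HidaIdx m × HidaIdx m,
          ∑ J ∈ I.powerset.toFinset,
            (∏ j, bigB C₁ Cω (v j)) *
              (((Multiset.card J + l : ℕ)) : ℝ≥0∞) ^ (2*l) *
              (((Multiset.card (I - J) + l : ℕ)) : ℝ≥0∞) ^ (2*l) *
              (‖b₁ (J + ↑(List.ofFn fun j => (v j).1))‖₊ : ℝ≥0∞) ^ (2:ℕ) *
              (‖b₂ ((I - J) + ↑(List.ofFn fun j => (v j).2))‖₊ : ℝ≥0∞) ^ (2:ℕ) := by
  classical
  set ind : Multiset (HidaIdx m) → ℝ≥0∞ :=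
    fun J => if J ∈ I.powerset.toFinset then 1 else 0 with hind
  have hsum_ind : ∀ (f : Multiset (HidaIdx m) → ℝ≥0∞),
      ∑ J ∈ I.powerset.toFinset, f J = ∑' J, ind J * f J := by
    intro f
    rw [tsum_eq_sum (s := I.powerset.toFinset)
      (fun J hJ => by rw [hind]; simp [hJ])]
    refine Finset.sum_congr rfl fun J hJ => ?_
    rw [hind]; simp [hJ]
  simp_rw [hsum_ind]
  rw [← ENNReal.tsum_prod'
    (f := fun z : (Fin l → HidaIdx m × HidaIdx m) × Multiset (HidaIdx m) => ind z.2 *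
      (((∏ j, (‖(OmegaInv Cω (z.1 j).1 (z.1 j).2 : ℂ)‖₊ : ℝ≥0∞)) *
          (((Multiset.card z.2 + l : ℕ)) : ℝ≥0∞) ^ l *
          (((Multiset.card (I - z.2) + l : ℕ)) : ℝ≥0∞) ^ l) *
        ((‖b₁ (z.2 + ↑(List.ofFn fun j => (z.1 j).1))‖₊ : ℝ≥0∞) *
          (‖b₂ ((I - z.2) + ↑(List.ofFn fun j => (z.1 j).2))‖₊ : ℝ≥0∞))))]
  have key := sq_tsum_le
    (x := fun z : (Fin l → HidaIdx m × HidaIdx m) × Multiset (HidaIdx m) => ind z.2 *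
      (((∏ j, (‖(OmegaInv Cω (z.1 j).1 (z.1 j).2 : ℂ)‖₊ : ℝ≥0∞)) *
          (((Multiset.card z.2 + l : ℕ)) : ℝ≥0∞) ^ l *
          (((Multiset.card (I - z.2) + l : ℕ)) : ℝ≥0∞) ^ l) *
        ((‖b₁ (z.2 + ↑(List.ofFn fun j => (z.1 j).1))‖₊ : ℝ≥0∞) *
          (‖b₂ ((I - z.2) + ↑(List.ofFn fun j => (z.1 j).2))‖₊ : ℝ≥0∞))))
    (u := fun z => ind z.2 * ∏ j, psiP C₁ (z.1 j))
    (w := fun z => ind z.2 *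
      ((∏ j, bigB C₁ Cω (z.1 j)) *
        (((Multiset.card z.2 + l : ℕ)) : ℝ≥0∞) ^ (2*l) *
        (((Multiset.card (I - z.2) + l : ℕ)) : ℝ≥0∞) ^ (2*l) *
        (‖b₁ (z.2 + ↑(List.ofFn fun j => (z.1 j).1))‖₊ : ℝ≥0∞) ^ (2:ℕ) *
        (‖b₂ ((I - z.2) + ↑(List.ofFn fun j => (z.1 j).2))‖₊ : ℝ≥0∞) ^ (2:ℕ))) ?_
  · refine le_trans key ?_
    have hu : (∑' z : (Fin l → HidaIdx m × HidaIdx m) × Multiset (HidaIdx m),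
        ind z.2 * ∏ j, psiP C₁ (z.1 j))
        ≤ (∑' pq : HidaIdx m × HidaIdx m, psiP C₁ pq) ^ l * 2 ^ (Multiset.card I) := by
      rw [ENNReal.tsum_prod']
      have : ∀ v : Fin l → HidaIdx m × HidaIdx m,
          ∑' J : Multiset (HidaIdx m), ind J * ∏ j, psiP C₁ (v j)
            = (∏ j, psiP C₁ (v j)) * ∑' J, ind J := by
        intro v
        rw [← ENNReal.tsum_mul_left]
        congr 1; funext J; ring
      simp_rw [this]
      rw [ENNReal.tsum_mul_right, tsum_pi_prod]
      have hJb : ∑' J : Multiset (HidaIdx m), ind J ≤ 2 ^ Multiset.card I := by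
        rw [tsum_eq_sum (s := I.powerset.toFinset) (fun J hJ => by rw [hind]; simp [hJ])]
        have h0 : ∑ J ∈ I.powerset.toFinset, ind J = (I.powerset.toFinset.card : ℝ≥0∞) := by
          rw [Finset.card_eq_sum_ones]
          push_cast
          refine Finset.sum_congr rfl fun J hJ => ?_
          rw [hind]; simp [hJ]
        rw [h0]
        have h1 : I.powerset.toFinset.card ≤ 2 ^ Multiset.card I := by
          calc I.powerset.toFinset.card ≤ Multiset.card I.powerset := Multiset.toFinset_card_le _
            _ = 2 ^ Multiset.card I := Multiset.card_powerset I
        calc (I.powerset.toFinset.card : ℝ≥0∞) ≤ ((2 ^ Multiset.card I : ℕ) : ℝ≥0∞) := by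
              exact_mod_cast h1
          _ = 2 ^ Multiset.card I := by push_cast; rfl
      exact mul_le_mul' le_rfl hJb
    have hw : (∑' z : (Fin l → HidaIdx m × HidaIdx m) × Multiset (HidaIdx m),
        ind z.2 * ((∏ j, bigB C₁ Cω (z.1 j)) *
          (((Multiset.card z.2 + l : ℕ)) : ℝ≥0∞) ^ (2*l) *
          (((Multiset.card (I - z.2) + l : ℕ)) : ℝ≥0∞) ^ (2*l) *
          (‖b₁ (z.2 + ↑(List.ofFn fun j => (z.1 j).1))‖₊ : ℝ≥0∞) ^ (2:ℕ) *
          (‖b₂ ((I - z.2) + ↑(List.ofFn fun j => (z.1 j).2))‖₊ : ℝ≥0∞) ^ (2:ℕ)))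
        = ∑' v : Fin l → HidaIdx m × HidaIdx m,
          ∑ J ∈ I.powerset.toFinset,
            (∏ j, bigB C₁ Cω (v j)) *
              (((Multiset.card J + l : ℕ)) : ℝ≥0∞) ^ (2*l) *
              (((Multiset.card (I - J) + l : ℕ)) : ℝ≥0∞) ^ (2*l) *
              (‖b₁ (J + ↑(List.ofFn fun j => (v j).1))‖₊ : ℝ≥0∞) ^ (2:ℕ) *
              (‖b₂ ((I - J) + ↑(List.ofFn fun j => (v j).2))‖₊ : ℝ≥0∞) ^ (2:ℕ) := by
      rw [ENNReal.tsum_prod']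
      congr 1; funext v
      rw [hsum_ind]
    calc _ ≤ ((∑' pq : HidaIdx m × HidaIdx m, psiP C₁ pq) ^ l * 2 ^ (Multiset.card I)) *
          (∑' z : (Fin l → HidaIdx m × HidaIdx m) × Multiset (HidaIdx m),
            ind z.2 * ((∏ j, bigB C₁ Cω (z.1 j)) *
              (((Multiset.card z.2 + l : ℕ)) : ℝ≥0∞) ^ (2*l) *
              (((Multiset.card (I - z.2) + l : ℕ)) : ℝ≥0∞) ^ (2*l) *
              (‖b₁ (z.2 + ↑(List.ofFn fun j => (z.1 j).1))‖₊ : ℝ≥0∞) ^ (2:ℕ) *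
              (‖b₂ ((I - z.2) + ↑(List.ofFn fun j => (z.1 j).2))‖₊ : ℝ≥0∞) ^ (2:ℕ))) :=
          mul_le_mul' hu le_rfl
      _ = _ := by
          rw [hw]
          exact congrArg _ (tsum_congr fun v => hsum_ind _)
  · -- pointwise bound
    rintro ⟨v, J⟩
    by_cases hJ : J ∈ I.powerset.toFinset
    · have hind1 : ind J = 1 := by rw [hind]; simp [hJ]
      simp only [hind1, one_mul]
      have hΩ : (∏ j, (‖(OmegaInv Cω (v j).1 (v j).2 : ℂ)‖₊ : ℝ≥0∞)) ^ (2:ℕ)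
          ≤ (∏ j, psiP C₁ (v j)) * ∏ j, bigB C₁ Cω (v j) := by
        rw [← Finset.prod_pow, ← Finset.prod_mul_distrib]
        exact Finset.prod_le_prod' fun j _ => omega_sq_le hC₁ hCω (v j)
      calc (((∏ j, (‖(OmegaInv Cω (v j).1 (v j).2 : ℂ)‖₊ : ℝ≥0∞)) *
              (((Multiset.card J + l : ℕ)) : ℝ≥0∞) ^ l *
              (((Multiset.card (I - J) + l : ℕ)) : ℝ≥0∞) ^ l) *
            ((‖b₁ (J + ↑(List.ofFn fun j => (v j).1))‖₊ : ℝ≥0∞) *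
              (‖b₂ ((I - J) + ↑(List.ofFn fun j => (v j).2))‖₊ : ℝ≥0∞))) ^ (2:ℕ)
          = (∏ j, (‖(OmegaInv Cω (v j).1 (v j).2 : ℂ)‖₊ : ℝ≥0∞)) ^ (2:ℕ) *
            ((((Multiset.card J + l : ℕ)) : ℝ≥0∞) ^ (2*l) *
              (((Multiset.card (I - J) + l : ℕ)) : ℝ≥0∞) ^ (2*l) *
              (‖b₁ (J + ↑(List.ofFn fun j => (v j).1))‖₊ : ℝ≥0∞) ^ (2:ℕ) *
              (‖b₂ ((I - J) + ↑(List.ofFn fun j => (v j).2))‖₊ : ℝ≥0∞) ^ (2:ℕ)) := by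
            rw [show 2*l = l*2 from Nat.mul_comm 2 l]
            simp only [pow_mul]
            ring
        _ ≤ ((∏ j, psiP C₁ (v j)) * ∏ j, bigB C₁ Cω (v j)) *
            ((((Multiset.card J + l : ℕ)) : ℝ≥0∞) ^ (2*l) *
              (((Multiset.card (I - J) + l : ℕ)) : ℝ≥0∞) ^ (2*l) *
              (‖b₁ (J + ↑(List.ofFn fun j => (v j).1))‖₊ : ℝ≥0∞) ^ (2:ℕ) *
              (‖b₂ ((I - J) + ↑(List.ofFn fun j => (v j).2))‖₊ : ℝ≥0∞) ^ (2:ℕ)) := by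
            gcongr
        _ = (∏ j, psiP C₁ (v j)) *
            ((∏ j, bigB C₁ Cω (v j)) *
              (((Multiset.card J + l : ℕ)) : ℝ≥0∞) ^ (2*l) *
              (((Multiset.card (I - J) + l : ℕ)) : ℝ≥0∞) ^ (2*l) *
              (‖b₁ (J + ↑(List.ofFn fun j => (v j).1))‖₊ : ℝ≥0∞) ^ (2:ℕ) *
              (‖b₂ ((I - J) + ↑(List.ofFn fun j => (v j).2))‖₊ : ℝ≥0∞) ^ (2:ℕ)) := by ring
    · have hind0 : ind J = 0 := by rw [hind]; simp [hJ]
      simp [hind0]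

end Step2

/-! ### Step E: translation bound for the shifted sums -/

section StepE

variable {m : ℕ}

lemma cast_le_two_pow (n : ℕ) : ((n:ℕ) : ℝ≥0∞) ≤ 2 ^ n := by
  calc ((n:ℕ) : ℝ≥0∞) ≤ ((2^n : ℕ) : ℝ≥0∞) := by exact_mod_cast (Nat.lt_two_pow_self (n := n)).le
    _ = 2 ^ n := by push_cast; rfl

lemma Sbound {C₁ r C : ℝ} (hC₁ : 0 < C₁) (hr : 0 < r) (hC : 0 < C) (l : ℕ)
    (b : Multiset (HidaIdx m) → ℂ) (u : Fin l → HidaIdx m) :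
    ∑' J : Multiset (HidaIdx m),
      ENNReal.ofReal (hidaWeight C₁ r J) * ENNReal.ofReal (2*C) ^ (Multiset.card J) *
        (((Multiset.card J + l : ℕ)) : ℝ≥0∞) ^ (2*l) *
        (‖b (J + ((List.ofFn u : List (HidaIdx m)) : Multiset (HidaIdx m)))‖₊ : ℝ≥0∞) ^ (2:ℕ)
    ≤ ((ENNReal.ofReal (2*C))⁻¹) ^ l *
        (∏ j, ENNReal.ofReal ((ek C₁ (u j).1) ^ (-((r+4)/2)))) *
      weightedSumL C₁ (r+4) (2^(l+1)*C) l b := by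
  set s : Multiset (HidaIdx m) := ((List.ofFn u : List (HidaIdx m)) : Multiset (HidaIdx m))
    with hsdef
  have hs : Multiset.card s = l := card_coe_ofFn u
  set r₁ : ℝ := r + 4 with hr₁
  set EP' : ℝ≥0∞ := ∏ j, ENNReal.ofReal ((ek C₁ (u j).1) ^ (-(r₁/2))) with hEP
  have hne : ENNReal.ofReal (2*C) ≠ 0 := (ENNReal.ofReal_pos.2 (by linarith)).ne'
  have hnt : ENNReal.ofReal (2*C) ≠ ⊤ := ENNReal.ofReal_ne_top
  have hterm : ∀ J : Multiset (HidaIdx m),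
      ENNReal.ofReal (hidaWeight C₁ r J) * ENNReal.ofReal (2*C) ^ (Multiset.card J) *
        (((Multiset.card J + l : ℕ)) : ℝ≥0∞) ^ (2*l) * (‖b (J + s)‖₊ : ℝ≥0∞) ^ (2:ℕ)
      ≤ ((ENNReal.ofReal (2*C))⁻¹) ^ l * EP' *
        ((‖b (J + s)‖₊ : ℝ≥0∞) ^ (2:ℕ) * ENNReal.ofReal (hidaWeight C₁ r₁ (J+s)) *
          ENNReal.ofReal (2^(l+1)*C) ^ (Multiset.card (J+s)) *
          ((Multiset.card (J+s) : ℕ) : ℝ≥0∞) ^ l) := by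
    intro J
    have hcard : Multiset.card (J + s) = Multiset.card J + l := by
      rw [Multiset.card_add, hs]
    have hA : ENNReal.ofReal (hidaWeight C₁ r J)
        ≤ ENNReal.ofReal (hidaWeight C₁ r₁ (J+s)) * EP' := by
      have h2 : ENNReal.ofReal (hidaWeight C₁ r₁ (J+s))
          = ENNReal.ofReal (hidaWeight C₁ r₁ J) *
            ∏ j, ENNReal.ofReal ((ek C₁ (u j).1) ^ (r₁/2)) := by
        rw [hidaWeight_add, ENNReal.ofReal_mul (hidaWeight_pos hC₁ J).le]
        congr 1
        rw [hsdef, hidaWeight_coe_ofFn,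
          ENNReal.ofReal_prod_of_nonneg (fun j _ => Real.rpow_nonneg (ek_pos hC₁ _).le _)]
      have h3 : (∏ j, ENNReal.ofReal ((ek C₁ (u j).1) ^ (r₁/2))) * EP' = 1 := by
        rw [hEP, ← Finset.prod_mul_distrib]
        refine Finset.prod_eq_one fun j _ => ?_
        rw [← ENNReal.ofReal_mul (Real.rpow_nonneg (ek_pos hC₁ _).le _),
          ← Real.rpow_add (ek_pos hC₁ _), add_neg_cancel, Real.rpow_zero, ENNReal.ofReal_one]
      calc ENNReal.ofReal (hidaWeight C₁ r J)
          ≤ ENNReal.ofReal (hidaWeight C₁ r₁ J) :=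
            ENNReal.ofReal_le_ofReal (hidaWeight_mono hC₁ (by rw [hr₁]; linarith) J)
        _ = ENNReal.ofReal (hidaWeight C₁ r₁ J) *
              ((∏ j, ENNReal.ofReal ((ek C₁ (u j).1) ^ (r₁/2))) * EP') := by
            rw [h3, mul_one]
        _ = (ENNReal.ofReal (hidaWeight C₁ r₁ J) *
              ∏ j, ENNReal.ofReal ((ek C₁ (u j).1) ^ (r₁/2))) * EP' := by ring
        _ = ENNReal.ofReal (hidaWeight C₁ r₁ (J+s)) * EP' := by rw [← h2]
    have hB : (ENNReal.ofReal (2*C))⁻¹ ^ l * ENNReal.ofReal (2*C) ^ (Multiset.card (J+s))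
        = ENNReal.ofReal (2*C) ^ (Multiset.card J) := by
      rw [hcard, pow_add]
      calc (ENNReal.ofReal (2*C))⁻¹ ^ l *
            (ENNReal.ofReal (2*C) ^ Multiset.card J * ENNReal.ofReal (2*C) ^ l)
          = ((ENNReal.ofReal (2*C))⁻¹ * ENNReal.ofReal (2*C)) ^ l *
              ENNReal.ofReal (2*C) ^ Multiset.card J := by rw [mul_pow]; ring
        _ = ENNReal.ofReal (2*C) ^ Multiset.card J := by
            rw [ENNReal.inv_mul_cancel hne hnt, one_pow, one_mul]
    have hoB : ENNReal.ofReal (2^(l+1)*C) = 2^l * ENNReal.ofReal (2*C) := by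
      rw [show (2:ℝ)^(l+1)*C = 2^l * (2*C) by ring, ENNReal.ofReal_mul (by positivity),
        ENNReal.ofReal_pow (by norm_num)]
      norm_num
    have hCineq : (((Multiset.card J + l : ℕ)) : ℝ≥0∞) ^ (2*l) *
          ENNReal.ofReal (2*C) ^ (Multiset.card (J+s))
        ≤ ((Multiset.card (J+s) : ℕ) : ℝ≥0∞) ^ l *
          ENNReal.ofReal (2^(l+1)*C) ^ (Multiset.card (J+s)) := by
      rw [← hcard]
      set n : ℕ := Multiset.card (J+s) with hn
      calc ((n : ℕ) : ℝ≥0∞) ^ (2*l) * ENNReal.ofReal (2*C) ^ n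
          = ((n : ℕ) : ℝ≥0∞) ^ l * (((n : ℕ) : ℝ≥0∞) ^ l * ENNReal.ofReal (2*C) ^ n) := by
            rw [two_mul, pow_add]; ring
        _ ≤ ((n : ℕ) : ℝ≥0∞) ^ l * (((2:ℝ≥0∞) ^ n) ^ l * ENNReal.ofReal (2*C) ^ n) := by
            gcongr
            exact cast_le_two_pow n
        _ = ((n : ℕ) : ℝ≥0∞) ^ l * ((2^l * ENNReal.ofReal (2*C)) ^ n) := by
            rw [mul_pow, pow_right_comm]
        _ = ((n : ℕ) : ℝ≥0∞) ^ l * ENNReal.ofReal (2^(l+1)*C) ^ n := by rw [hoB]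
    calc ENNReal.ofReal (hidaWeight C₁ r J) * ENNReal.ofReal (2*C) ^ (Multiset.card J) *
          (((Multiset.card J + l : ℕ)) : ℝ≥0∞) ^ (2*l) * (‖b (J + s)‖₊ : ℝ≥0∞) ^ (2:ℕ)
        ≤ (ENNReal.ofReal (hidaWeight C₁ r₁ (J+s)) * EP') *
            ENNReal.ofReal (2*C) ^ (Multiset.card J) *
            (((Multiset.card J + l : ℕ)) : ℝ≥0∞) ^ (2*l) * (‖b (J + s)‖₊ : ℝ≥0∞) ^ (2:ℕ) := by
          gcongr
      _ = (ENNReal.ofReal (hidaWeight C₁ r₁ (J+s)) * EP') *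
            ((ENNReal.ofReal (2*C))⁻¹ ^ l * ENNReal.ofReal (2*C) ^ (Multiset.card (J+s))) *
            (((Multiset.card J + l : ℕ)) : ℝ≥0∞) ^ (2*l) * (‖b (J + s)‖₊ : ℝ≥0∞) ^ (2:ℕ) := by
          rw [hB]
      _ = ((ENNReal.ofReal (2*C))⁻¹ ^ l * EP' *
            ((‖b (J + s)‖₊ : ℝ≥0∞) ^ (2:ℕ) * ENNReal.ofReal (hidaWeight C₁ r₁ (J+s)))) *
            ((((Multiset.card J + l : ℕ)) : ℝ≥0∞) ^ (2*l) *
              ENNReal.ofReal (2*C) ^ (Multiset.card (J+s))) := by ring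
      _ ≤ ((ENNReal.ofReal (2*C))⁻¹ ^ l * EP' *
            ((‖b (J + s)‖₊ : ℝ≥0∞) ^ (2:ℕ) * ENNReal.ofReal (hidaWeight C₁ r₁ (J+s)))) *
            (((Multiset.card (J+s) : ℕ) : ℝ≥0∞) ^ l *
              ENNReal.ofReal (2^(l+1)*C) ^ (Multiset.card (J+s))) := by
          gcongr
      _ = _ := by ring
  calc ∑' J : Multiset (HidaIdx m),
      ENNReal.ofReal (hidaWeight C₁ r J) * ENNReal.ofReal (2*C) ^ (Multiset.card J) *
        (((Multiset.card J + l : ℕ)) : ℝ≥0∞) ^ (2*l) * (‖b (J + s)‖₊ : ℝ≥0∞) ^ (2:ℕ)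
      ≤ ∑' J : Multiset (HidaIdx m), ((ENNReal.ofReal (2*C))⁻¹) ^ l * EP' *
          ((‖b (J + s)‖₊ : ℝ≥0∞) ^ (2:ℕ) * ENNReal.ofReal (hidaWeight C₁ r₁ (J+s)) *
            ENNReal.ofReal (2^(l+1)*C) ^ (Multiset.card (J+s)) *
            ((Multiset.card (J+s) : ℕ) : ℝ≥0∞) ^ l) :=
        Summable.tsum_le_tsum hterm ENNReal.summable ENNReal.summable
    _ = ((ENNReal.ofReal (2*C))⁻¹) ^ l * EP' *
        ∑' J : Multiset (HidaIdx m),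
          ((‖b (J + s)‖₊ : ℝ≥0∞) ^ (2:ℕ) * ENNReal.ofReal (hidaWeight C₁ r₁ (J+s)) *
            ENNReal.ofReal (2^(l+1)*C) ^ (Multiset.card (J+s)) *
            ((Multiset.card (J+s) : ℕ) : ℝ≥0∞) ^ l) := ENNReal.tsum_mul_left
    _ ≤ ((ENNReal.ofReal (2*C))⁻¹) ^ l * EP' * weightedSumL C₁ r₁ (2^(l+1)*C) l b := by
        gcongr
        rw [weightedSumL]
        exact tsum_comp_le_tsum_of_injective (add_left_injective s)
          (fun I => (‖b I‖₊ : ℝ≥0∞) ^ (2:ℕ) * ENNReal.ofReal (hidaWeight C₁ r₁ I) *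
            ENNReal.ofReal (2^(l+1)*C) ^ (Multiset.card I) *
            ((Multiset.card I : ℕ) : ℝ≥0∞) ^ l)
    _ = _ := rfl

end StepE

/-! ### Core estimate -/

section Core

variable {m : ℕ}

lemma core {C₁ Cω r C : ℝ} (hC₁ : 0 < C₁) (hCω : 0 < Cω) (hr : 0 < r) (hC : 0 < C)
    (l : ℕ) (b₁ b₂ : Multiset (HidaIdx m) → ℂ) :
    fockNormSq C₁ r C (Pl Cω l b₁ b₂) ≤
      ((∑' pq : HidaIdx m × HidaIdx m, psiP C₁ pq) ^ l *
        ((ENNReal.ofReal (2*C))⁻¹) ^ (2*l) *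
        (∑' pq : HidaIdx m × HidaIdx m, bigB C₁ Cω pq *
          ENNReal.ofReal ((ek C₁ pq.1.1) ^ (-((r+4)/2))) *
          ENNReal.ofReal ((ek C₁ pq.2.1) ^ (-((r+4)/2)))) ^ l) *
      weightedSumL C₁ (r+4) (2^(l+1)*C) l b₁ * weightedSumL C₁ (r+4) (2^(l+1)*C) l b₂ := by
  classical
  set Ψ : ℝ≥0∞ := ∑' pq : HidaIdx m × HidaIdx m, psiP C₁ pq with hΨ
  set Φ : ℝ≥0∞ := ∑' pq : HidaIdx m × HidaIdx m, bigB C₁ Cω pq *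
      ENNReal.ofReal ((ek C₁ pq.1.1) ^ (-((r+4)/2))) *
      ENNReal.ofReal ((ek C₁ pq.2.1) ^ (-((r+4)/2))) with hΦ
  set G₁ : ℝ≥0∞ := weightedSumL C₁ (r+4) (2^(l+1)*C) l b₁ with hG₁
  set G₂ : ℝ≥0∞ := weightedSumL C₁ (r+4) (2^(l+1)*C) l b₂ with hG₂
  set c2 : ℝ≥0∞ := (ENNReal.ofReal (2*C))⁻¹ with hc2
  -- the step-2 right-hand inner sum
  set U : Multiset (HidaIdx m) → ℝ≥0∞ := fun I =>
    ∑' v : Fin l → HidaIdx m × HidaIdx m,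
      ∑ J ∈ I.powerset.toFinset,
        (∏ j, bigB C₁ Cω (v j)) *
          (((Multiset.card J + l : ℕ)) : ℝ≥0∞) ^ (2*l) *
          (((Multiset.card (I - J) + l : ℕ)) : ℝ≥0∞) ^ (2*l) *
          (‖b₁ (J + ↑(List.ofFn fun j => (v j).1))‖₊ : ℝ≥0∞) ^ (2:ℕ) *
          (‖b₂ ((I - J) + ↑(List.ofFn fun j => (v j).2))‖₊ : ℝ≥0∞) ^ (2:ℕ) with hU
  set SA : (Fin l → HidaIdx m × HidaIdx m) → Multiset (HidaIdx m) → ℝ≥0∞ := fun v J =>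
    ENNReal.ofReal (hidaWeight C₁ r J) * ENNReal.ofReal (2*C) ^ (Multiset.card J) *
      (((Multiset.card J + l : ℕ)) : ℝ≥0∞) ^ (2*l) *
      (‖b₁ (J + ↑(List.ofFn fun j => (v j).1))‖₊ : ℝ≥0∞) ^ (2:ℕ) with hSA
  set SB : (Fin l → HidaIdx m × HidaIdx m) → Multiset (HidaIdx m) → ℝ≥0∞ := fun v K =>
    ENNReal.ofReal (hidaWeight C₁ r K) * ENNReal.ofReal (2*C) ^ (Multiset.card K) *
      (((Multiset.card K + l : ℕ)) : ℝ≥0∞) ^ (2*l) *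
      (‖b₂ (K + ↑(List.ofFn fun j => (v j).2))‖₊ : ℝ≥0∞) ^ (2:ℕ) with hSB
  have hI2 : ∀ I : Multiset (HidaIdx m), (‖Pl Cω l b₁ b₂ I‖₊ : ℝ≥0∞) ^ (2:ℕ)
      ≤ (Ψ ^ l * 2 ^ (Multiset.card I)) * U I := fun I =>
    le_trans (pow_le_pow_left' (step1 Cω l b₁ b₂ I) 2) (step2 hC₁ hCω l b₁ b₂ I)
  have hmid : ∑' I : Multiset (HidaIdx m),
      ENNReal.ofReal (hidaWeight C₁ r I) * ENNReal.ofReal (2*C) ^ (Multiset.card I) * U I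
      = ∑' v : Fin l → HidaIdx m × HidaIdx m,
          (∏ j, bigB C₁ Cω (v j)) * ((∑' J, SA v J) * (∑' K, SB v K)) := by
    have h1 : ∀ I : Multiset (HidaIdx m),
        ENNReal.ofReal (hidaWeight C₁ r I) * ENNReal.ofReal (2*C) ^ (Multiset.card I) * U I
        = ∑' v : Fin l → HidaIdx m × HidaIdx m,
            (∏ j, bigB C₁ Cω (v j)) * ∑ J ∈ I.powerset.toFinset, SA v J * SB v (I - J) := by
      intro I
      rw [hU, ← ENNReal.tsum_mul_left]
      congr 1; funext v
      rw [Finset.mul_sum, Finset.mul_sum]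
      refine Finset.sum_congr rfl fun J hJ => ?_
      have hJle : J ≤ I := by rwa [Multiset.mem_toFinset, Multiset.mem_powerset] at hJ
      have hIJ : J + (I - J) = I := add_tsub_cancel_of_le hJle
      have hwsplit : ENNReal.ofReal (hidaWeight C₁ r I)
          = ENNReal.ofReal (hidaWeight C₁ r J) * ENNReal.ofReal (hidaWeight C₁ r (I - J)) := by
        rw [← hIJ, hidaWeight_add, ENNReal.ofReal_mul (hidaWeight_pos hC₁ J).le,
          add_tsub_cancel_left]
      have hcsplit : Multiset.card I = Multiset.card J + Multiset.card (I - J) := by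
        rw [← hIJ, Multiset.card_add, add_tsub_cancel_left]
      rw [hwsplit, hcsplit, pow_add, hSA, hSB]
      ring
    simp_rw [h1]
    rw [ENNReal.tsum_comm]
    congr 1; funext v
    have h2 : ∀ I : Multiset (HidaIdx m),
        (∏ j, bigB C₁ Cω (v j)) * ∑ J ∈ I.powerset.toFinset, SA v J * SB v (I - J)
        = (∏ j, bigB C₁ Cω (v j)) * ∑ J ∈ I.powerset.toFinset,
            (fun J K => SA v J * SB v K) J (I - J) := fun I => rfl
    simp_rw [h2]
    rw [ENNReal.tsum_mul_left, tsum_powerset (fun J K => SA v J * SB v K)]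
    congr 1
    rw [ENNReal.tsum_prod' (f := fun p : Multiset (HidaIdx m) × Multiset (HidaIdx m) =>
      SA v p.1 * SB v p.2)]
    simp_rw [ENNReal.tsum_mul_left]
    rw [ENNReal.tsum_mul_right]
  have hSAle : ∀ v : Fin l → HidaIdx m × HidaIdx m,
      (∑' J, SA v J) ≤ c2 ^ l *
        (∏ j, ENNReal.ofReal ((ek C₁ ((v j).1).1) ^ (-((r+4)/2)))) * G₁ :=
    fun v => Sbound hC₁ hr hC l b₁ (fun j => (v j).1)
  have hSBle : ∀ v : Fin l → HidaIdx m × HidaIdx m,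
      (∑' K, SB v K) ≤ c2 ^ l *
        (∏ j, ENNReal.ofReal ((ek C₁ ((v j).2).1) ^ (-((r+4)/2)))) * G₂ :=
    fun v => Sbound hC₁ hr hC l b₂ (fun j => (v j).2)
  rw [fockNormSq]
  calc ∑' I : Multiset (HidaIdx m), (‖Pl Cω l b₁ b₂ I‖₊ : ℝ≥0∞) ^ 2 *
        ENNReal.ofReal (hidaWeight C₁ r I) * ENNReal.ofReal C ^ (Multiset.card I)
      ≤ ∑' I : Multiset (HidaIdx m), ((Ψ ^ l * 2 ^ (Multiset.card I)) * U I) *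
          ENNReal.ofReal (hidaWeight C₁ r I) * ENNReal.ofReal C ^ (Multiset.card I) := by
        refine Summable.tsum_le_tsum (fun I => ?_) ENNReal.summable ENNReal.summable
        exact mul_le_mul_left (mul_le_mul_left (hI2 I) _) _
    _ = Ψ ^ l * ∑' I : Multiset (HidaIdx m),
          ENNReal.ofReal (hidaWeight C₁ r I) * ENNReal.ofReal (2*C) ^ (Multiset.card I) * U I := by
        rw [← ENNReal.tsum_mul_left]
        congr 1; funext I
        have h2C : (2:ℝ≥0∞) * ENNReal.ofReal C = ENNReal.ofReal (2*C) := by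
          rw [ENNReal.ofReal_mul (by norm_num : (0:ℝ) ≤ 2)]
          norm_num
        calc ((Ψ ^ l * 2 ^ (Multiset.card I)) * U I) *
              ENNReal.ofReal (hidaWeight C₁ r I) * ENNReal.ofReal C ^ (Multiset.card I)
            = Ψ ^ l * (ENNReal.ofReal (hidaWeight C₁ r I) *
                ((2:ℝ≥0∞) * ENNReal.ofReal C) ^ (Multiset.card I) * U I) := by
              rw [mul_pow]; ring
          _ = _ := by rw [h2C]
    _ = Ψ ^ l * ∑' v : Fin l → HidaIdx m × HidaIdx m,
          (∏ j, bigB C₁ Cω (v j)) * ((∑' J, SA v J) * (∑' K, SB v K)) := by rw [hmid]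
    _ ≤ Ψ ^ l * ∑' v : Fin l → HidaIdx m × HidaIdx m,
          (∏ j, bigB C₁ Cω (v j)) *
            ((c2 ^ l * (∏ j, ENNReal.ofReal ((ek C₁ ((v j).1).1) ^ (-((r+4)/2)))) * G₁) *
             (c2 ^ l * (∏ j, ENNReal.ofReal ((ek C₁ ((v j).2).1) ^ (-((r+4)/2)))) * G₂)) := by
        refine mul_le_mul_right (Summable.tsum_le_tsum (fun v => ?_) ENNReal.summable ENNReal.summable) _
        exact mul_le_mul_right (mul_le_mul' (hSAle v) (hSBle v)) _
    _ = Ψ ^ l * (c2 ^ (2*l) * G₁ * G₂ *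
          ∑' v : Fin l → HidaIdx m × HidaIdx m,
            ∏ j, (bigB C₁ Cω (v j) *
              ENNReal.ofReal ((ek C₁ ((v j).1).1) ^ (-((r+4)/2))) *
              ENNReal.ofReal ((ek C₁ ((v j).2).1) ^ (-((r+4)/2))))) := by
        congr 1
        rw [← ENNReal.tsum_mul_left]
        congr 1; funext v
        rw [show (2*l) = l + l from (two_mul l)]
        simp_rw [Finset.prod_mul_distrib]
        rw [pow_add]
        ring
    _ = Ψ ^ l * (c2 ^ (2*l) * G₁ * G₂ * Φ ^ l) := by
        congr 1
        rw [tsum_pi_prod l (fun pq : HidaIdx m × HidaIdx m => bigB C₁ Cω pq *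
          ENNReal.ofReal ((ek C₁ pq.1.1) ^ (-((r+4)/2))) *
          ENNReal.ofReal ((ek C₁ pq.2.1) ^ (-((r+4)/2)))), hΦ]
    _ = _ := by ring

end Core

/-! ### Absorption lemmas -/

section Absorb

lemma wSumL_mono_C {β : Type*} {C₁ r B B' : ℝ} (hB : 0 ≤ B) (hBB' : B ≤ B') (l : ℕ)
    (b : Multiset (ℤ × β) → ℂ) :
    weightedSumL C₁ r B l b ≤ weightedSumL C₁ r B' l b := by
  refine Summable.tsum_le_tsum (fun I => ?_) ENNReal.summable ENNReal.summable
  gcongr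

lemma wSumL_le_fockNormSq {β : Type*} {C₁ r B C' : ℝ} (hB : 0 ≤ B) (l : ℕ)
    (h : 2^l * B ≤ C') (b : Multiset (ℤ × β) → ℂ) :
    weightedSumL C₁ r B l b ≤ fockNormSq C₁ r C' b := by
  refine Summable.tsum_le_tsum (fun I => ?_) ENNReal.summable ENNReal.summable
  set n : ℕ := Multiset.card I with hn
  have hoB : ENNReal.ofReal (2^l * B) = 2^l * ENNReal.ofReal B := by
    rw [ENNReal.ofReal_mul (by positivity), ENNReal.ofReal_pow (by norm_num)]
    norm_num
  have key : ENNReal.ofReal B ^ n * ((n : ℕ) : ℝ≥0∞) ^ l ≤ ENNReal.ofReal C' ^ n := by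
    calc ENNReal.ofReal B ^ n * ((n : ℕ) : ℝ≥0∞) ^ l
        ≤ ENNReal.ofReal B ^ n * ((2:ℝ≥0∞) ^ n) ^ l := by
          gcongr
          exact cast_le_two_pow n
      _ = (2 ^ l * ENNReal.ofReal B) ^ n := by
          rw [pow_right_comm, mul_pow]; ring
      _ = ENNReal.ofReal (2^l * B) ^ n := by rw [hoB]
      _ ≤ ENNReal.ofReal C' ^ n := by
          gcongr
  calc (‖b I‖₊ : ℝ≥0∞) ^ 2 * ENNReal.ofReal (hidaWeight C₁ r I) * ENNReal.ofReal B ^ n *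
        ((n : ℕ) : ℝ≥0∞) ^ l
      = (‖b I‖₊ : ℝ≥0∞) ^ 2 * ENNReal.ofReal (hidaWeight C₁ r I) *
          (ENNReal.ofReal B ^ n * ((n : ℕ) : ℝ≥0∞) ^ l) := by ring
    _ ≤ (‖b I‖₊ : ℝ≥0∞) ^ 2 * ENNReal.ofReal (hidaWeight C₁ r I) * ENNReal.ofReal C' ^ n :=
        mul_le_mul_right key _

lemma rpow_half_le_add_one (x : ℝ≥0∞) : x ^ (1/2:ℝ) ≤ x + 1 := by
  by_cases hx : x ≤ 1
  · calc x ^ (1/2:ℝ) ≤ (1:ℝ≥0∞) ^ (1/2:ℝ) := ENNReal.rpow_le_rpow hx (by norm_num)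
      _ = 1 := ENNReal.one_rpow _
      _ ≤ x + 1 := le_add_self
  · have h1 : 1 ≤ x := le_of_not_ge hx
    calc x ^ (1/2:ℝ) ≤ x ^ (1:ℝ) := ENNReal.rpow_le_rpow_of_exponent_le h1 (by norm_num)
      _ = x := ENNReal.rpow_one x
      _ ≤ x + 1 := le_add_right le_rfl

end Absorb

end PlAux

/-- Continuity of `P_l` on the Hida test space, together with the key estimate
`‖P_l(F₁,F₂)‖²_{r,C} ≤ K (Σ_I w_{r₁}(I) C₁'^{|I|} |I|^l |b¹_I|²)(Σ_I w_{r₁}(I) C₁'^{|I|} |I|^l |b²_I|²)`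
and the absorption `Σ_I w_{r₁}(I) C₁'^{|I|} |I|^l |b_I|² ≤ ‖F‖²_{r₁,C'₁}` for `C'₁` large. -/
theorem Pl_continuous (m : ℕ) (C₁ Cω : ℝ) (hC₁ : 0 < C₁) (hCω : 0 < Cω) (l : ℕ) :
    ∀ r C : ℝ, 0 < r → 0 < C → ∃ r₁ C₁' : ℝ, ∃ K : ℝ≥0∞, 0 < r₁ ∧ 0 < C₁' ∧
      0 < K ∧ K < ⊤ ∧
      (∀ b₁ b₂ : Multiset (HidaIdx m) → ℂ, memHida C₁ b₁ → memHida C₁ b₂ →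
        fockNorm C₁ r C (Pl Cω l b₁ b₂) ≤
          K * fockNorm C₁ r₁ C₁' b₁ * fockNorm C₁ r₁ C₁' b₂) ∧
      (∀ b₁ b₂ : Multiset (HidaIdx m) → ℂ, memHida C₁ b₁ → memHida C₁ b₂ →
        fockNormSq C₁ r C (Pl Cω l b₁ b₂) ≤
          K * weightedSumL C₁ r₁ C₁' l b₁ * weightedSumL C₁ r₁ C₁' l b₂) ∧
      (∃ C'₁ : ℝ, C₁' < C'₁ ∧ ∀ b : Multiset (HidaIdx m) → ℂ,
        weightedSumL C₁ r₁ C₁' l b ≤ fockNormSq C₁ r₁ C'₁ b) := by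
  intro r C hr hC
  have hr₁ : (0:ℝ) < r + 4 := by linarith
  have hC₁'pos : (0:ℝ) < 2^(2*l+1) * C := by positivity
  set K₀ : ℝ≥0∞ := (∑' pq : HidaIdx m × HidaIdx m, PlAux.psiP C₁ pq) ^ l *
      ((ENNReal.ofReal (2*C))⁻¹) ^ (2*l) *
      (∑' pq : HidaIdx m × HidaIdx m, PlAux.bigB C₁ Cω pq *
        ENNReal.ofReal ((PlAux.ek C₁ pq.1.1) ^ (-((r+4)/2))) *
        ENNReal.ofReal ((PlAux.ek C₁ pq.2.1) ^ (-((r+4)/2)))) ^ l with hK₀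
  have hK₀top : K₀ < ⊤ := by
    rw [hK₀]
    refine ENNReal.mul_lt_top (ENNReal.mul_lt_top ?_ ?_) ?_
    · exact ENNReal.pow_lt_top (PlAux.Psi_lt_top hC₁ m)
    · exact ENNReal.pow_lt_top (ENNReal.inv_lt_top.2 (ENNReal.ofReal_pos.2 (by linarith)))
    · exact ENNReal.pow_lt_top (PlAux.Phi_lt_top hC₁ hCω (by linarith) m)
  have hBle : (2:ℝ)^(l+1) * C ≤ 2^(2*l+1) * C := by
    have h2 : (2:ℝ)^(l+1) ≤ 2^(2*l+1) := pow_le_pow_right₀ (by norm_num) (by omega)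
    nlinarith
  have habs : ∀ b : Multiset (HidaIdx m) → ℂ,
      weightedSumL C₁ (r+4) (2^(l+1)*C) l b ≤ fockNormSq C₁ (r+4) (2^(2*l+1) * C) b := by
    intro b
    refine PlAux.wSumL_le_fockNormSq (by positivity) l ?_ b
    have : (2:ℝ)^l * (2^(l+1)*C) = 2^(2*l+1)*C := by
      rw [show 2*l+1 = l + (l+1) by omega, pow_add]
      ring
    linarith
  have hmono : ∀ b : Multiset (HidaIdx m) → ℂ,
      weightedSumL C₁ (r+4) (2^(l+1)*C) l b ≤ weightedSumL C₁ (r+4) (2^(2*l+1)*C) l b :=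
    fun b => PlAux.wSumL_mono_C (by positivity) hBle l b
  refine ⟨r + 4, 2^(2*l+1) * C, K₀ + 1, hr₁, hC₁'pos, ?_, ?_, ?_, ?_, ?_⟩
  · exact lt_of_lt_of_le zero_lt_one le_add_self
  · exact ENNReal.add_lt_top.2 ⟨hK₀top, ENNReal.one_lt_top⟩
  · intro b₁ b₂ _ _
    have h2 : fockNormSq C₁ r C (Pl Cω l b₁ b₂) ≤
        K₀ * fockNormSq C₁ (r+4) (2^(2*l+1)*C) b₁ * fockNormSq C₁ (r+4) (2^(2*l+1)*C) b₂ :=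
      le_trans (PlAux.core hC₁ hCω hr hC l b₁ b₂)
        (mul_le_mul' (mul_le_mul' le_rfl (habs b₁)) (habs b₂))
    rw [fockNorm, fockNorm, fockNorm]
    calc (fockNormSq C₁ r C (Pl Cω l b₁ b₂)) ^ (1/2:ℝ)
        ≤ (K₀ * fockNormSq C₁ (r+4) (2^(2*l+1)*C) b₁ *
            fockNormSq C₁ (r+4) (2^(2*l+1)*C) b₂) ^ (1/2:ℝ) :=
          ENNReal.rpow_le_rpow h2 (by norm_num)
      _ = K₀ ^ (1/2:ℝ) * (fockNormSq C₁ (r+4) (2^(2*l+1)*C) b₁) ^ (1/2:ℝ) *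
            (fockNormSq C₁ (r+4) (2^(2*l+1)*C) b₂) ^ (1/2:ℝ) := by
          rw [ENNReal.mul_rpow_of_nonneg _ _ (by norm_num : (0:ℝ) ≤ 1/2),
            ENNReal.mul_rpow_of_nonneg _ _ (by norm_num : (0:ℝ) ≤ 1/2)]
      _ ≤ (K₀ + 1) * (fockNormSq C₁ (r+4) (2^(2*l+1)*C) b₁) ^ (1/2:ℝ) *
            (fockNormSq C₁ (r+4) (2^(2*l+1)*C) b₂) ^ (1/2:ℝ) :=
          mul_le_mul_left (mul_le_mul_left (PlAux.rpow_half_le_add_one K₀) _) _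
  · intro b₁ b₂ _ _
    refine le_trans (PlAux.core hC₁ hCω hr hC l b₁ b₂) ?_
    exact mul_le_mul' (mul_le_mul' le_self_add (hmono b₁)) (hmono b₂)
  · refine ⟨2^(l+1) * (2^(2*l+1) * C), ?_, ?_⟩
    · have h1 : (1:ℝ) < 2^(l+1) := by
        apply one_lt_pow₀ (by norm_num)
        omega
      nlinarith
    · intro b
      refine PlAux.wSumL_le_fockNormSq (le_of_lt hC₁'pos) l ?_ b
      have h2 : (2:ℝ)^l ≤ 2^(l+1) := pow_le_pow_right₀ (by norm_num) (by omega)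
      nlinarith
end
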